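/- arXiv:2406.18174 — 10 statements merged into one kernel-verified Lean document; each statement's English description precedes it below -/
import Mathlib

section
/- Suppose v : 𝓕 → ℝ is a set function such that for all measurable B ⊆ A, v(B) = sup { μ(B) : μ ∈ 𝓒₋(A) }, where 𝓒₋(A) is the set of finite measures μ on A with μ(A)=v(A) and μ(E) ≤ v(E) for all measurable E ⊆ A. Then v satisfies the submodular inequality v(A)+v(B) ≥ v(A∪B)+v(A∩B) for all A,B ∈ 𝓕. -/
/-! On `C = A ∪ B`, every measure `μ ∈ 𝓒₋(C)` satisfies
`μ(A ∩ B) = μ(A) + μ(B) - μ(C) ≤ v(A) + v(B) - v(C)`; taking the supremum over `𝓒₋(C)` gives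
the inequality. If `𝓒₋(C)` is empty, all suprema are `sSup ∅ = 0`, so `v` vanishes below `C`. -/

open MeasureTheory Set

namespace MeasureTheory

variable {Ω : Type*} [MeasurableSpace Ω]

/-- The set `𝓒₋(A)`, a measure on `(A, 𝓕|_A)` being modelled as a measure on `Ω` concentrated
on `A`. -/
def lowerCore (v : Set Ω → ℝ) (A : Set Ω) : Set (Measure Ω) :=
  {μ | μ.restrict A = μ ∧ IsFiniteMeasure μ ∧ μ.real A = v A ∧
    ∀ E, MeasurableSet E → E ⊆ A → μ.real E ≤ v E}

theorem measureReal_inter_le_of_mem_lowerCore {v : Set Ω → ℝ} {A B : Set Ω}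
    (hA : MeasurableSet A) (hB : MeasurableSet B) {μ : Measure Ω}
    (hμ : μ ∈ lowerCore v (A ∪ B)) : μ.real (A ∩ B) ≤ v A + v B - v (A ∪ B) := by
  obtain ⟨-, _, hμC, hμle⟩ := hμ
  have hincl_excl := measureReal_union_add_inter (μ := μ) (s := A) hB
  linarith [hμle A hA subset_union_left, hμle B hB subset_union_right]

end MeasureTheory

theorem sup_representation_implies_submodular {Ω : Type*} [MeasurableSpace Ω]
    (v : Set Ω → ℝ)
    (h : ∀ A B : Set Ω, MeasurableSet A → MeasurableSet B → B ⊆ A →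
      v B = sSup {x : ℝ | ∃ μ : Measure Ω, μ.restrict A = μ ∧ IsFiniteMeasure μ ∧
        (μ A).toReal = v A ∧
        (∀ E : Set Ω, MeasurableSet E → E ⊆ A → (μ E).toReal ≤ v E) ∧
        x = (μ B).toReal}) :
    ∀ A B : Set Ω, MeasurableSet A → MeasurableSet B →
      v (A ∪ B) + v (A ∩ B) ≤ v A + v B := by
  intro A B hA hB
  have hrep : ∀ D, MeasurableSet D → D ⊆ A ∪ B →
      v D = sSup ((fun μ : Measure Ω => μ.real D) '' lowerCore v (A ∪ B)) := by
    intro D hD hDC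
    rw [h _ D (hA.union hB) hD hDC]
    congr 1
    ext x
    simp only [lowerCore, mem_ofPred_eq, mem_image, and_assoc, eq_comm (a := x), Measure.real]
  have hInter : A ∩ B ⊆ A ∪ B := inter_subset_left.trans subset_union_left
  rcases (lowerCore v (A ∪ B)).eq_empty_or_nonempty with hempty | hne
  · have hzero : ∀ D, MeasurableSet D → D ⊆ A ∪ B → v D = 0 := fun D hD hDC => by
      rw [hrep D hD hDC, hempty, image_empty, Real.sSup_empty]
    rw [hzero _ (hA.union hB) subset_rfl, hzero _ (hA.inter hB) hInter,
      hzero A hA subset_union_left, hzero B hB subset_union_right]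
  · have hbound : v (A ∩ B) ≤ v A + v B - v (A ∪ B) := by
      rw [hrep _ (hA.inter hB) hInter]
      exact csSup_le (hne.image _) (forall_mem_image.2 fun μ hμ =>
        measureReal_inter_le_of_mem_lowerCore hA hB hμ)
    linarith
end

section
/- Suppose v : 𝓕 → ℝ satisfies, for all measurable B ⊆ A, v(B) = inf { μ(B) : μ ∈ 𝓒₊(A) }, where 𝓒₊(A) is the set of finite measures μ on A with μ(A)=v(A) and μ(E) ≥ v(E) for all measurable E ⊆ A. Then v satisfies the supermodular inequality v(A)+v(B) ≤ v(A∪B)+v(A∩B) for all A,B ∈ 𝓕. -/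
/-! A measure `μ ∈ 𝓒₊(A ∪ B)` is modular and dominates `v` on `A` and on `B` while agreeing with it
on `A ∪ B`, so `μ (A ∩ B) = μ A + μ B - μ (A ∪ B) ≥ v A + v B - v (A ∪ B)`; taking the infimum over
`μ` gives supermodularity. If `𝓒₊(A ∪ B)` is empty, every infimum is `sInf ∅ = 0`, so `v` vanishes
on the subsets of `A ∪ B` and the inequality is trivial. -/

open MeasureTheory Set

namespace MeasureTheory

variable {Ω : Type*} [MeasurableSpace Ω]

/-- `𝓒₊(A)`, with a measure on `A` encoded as a measure on `Ω` concentrated on `A`. -/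
def core (v : Set Ω → ℝ) (A : Set Ω) : Set (Measure Ω) :=
  {μ | μ.restrict A = μ ∧ IsFiniteMeasure μ ∧ μ.real A = v A ∧
    ∀ E : Set Ω, MeasurableSet E → E ⊆ A → v E ≤ μ.real E}

theorem add_sub_le_measureReal_inter_of_mem_core {v : Set Ω → ℝ} {A B : Set Ω}
    (hA : MeasurableSet A) (hB : MeasurableSet B) {μ : Measure Ω} (hμ : μ ∈ core v (A ∪ B)) :
    v A + v B - v (A ∪ B) ≤ μ.real (A ∩ B) := by
  obtain ⟨-, hfin, hunion, hdom⟩ := hμ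
  have hmod := measureReal_union_add_inter (μ := μ) (s := A) hB
  linarith [hdom A hA subset_union_left, hdom B hB subset_union_right]

end MeasureTheory

theorem inf_representation_implies_supermodular {Ω : Type*} [MeasurableSpace Ω]
    (v : Set Ω → ℝ)
    (h : ∀ A B : Set Ω, MeasurableSet A → MeasurableSet B → B ⊆ A →
      v B = sInf {x : ℝ | ∃ μ : Measure Ω, μ.restrict A = μ ∧ IsFiniteMeasure μ ∧
        (μ A).toReal = v A ∧
        (∀ E : Set Ω, MeasurableSet E → E ⊆ A → v E ≤ (μ E).toReal) ∧
        x = (μ B).toReal}) :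
    ∀ A B : Set Ω, MeasurableSet A → MeasurableSet B →
      v A + v B ≤ v (A ∪ B) + v (A ∩ B) := by
  intro A B hA hB
  have hrep : ∀ C, MeasurableSet C → C ⊆ A ∪ B →
      v C = sInf ((fun μ => μ.real C) '' core v (A ∪ B)) := by
    intro C hC hCU
    rw [h _ _ (hA.union hB) hC hCU]
    congr 1
    ext x
    simp [core, Measure.real, eq_comm, and_assoc]
  have hAB : A ∩ B ⊆ A ∪ B := inter_subset_left.trans subset_union_left
  rcases (core v (A ∪ B)).eq_empty_or_nonempty with hempty | hne
  · simp only [hempty, image_empty, Real.sInf_empty] at hrep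
    rw [hrep A hA subset_union_left, hrep B hB subset_union_right, hrep _ (hA.union hB) subset_rfl,
      hrep _ (hA.inter hB) hAB]
  · have hinter : v A + v B - v (A ∪ B) ≤ v (A ∩ B) := by
      rw [hrep _ (hA.inter hB) hAB]
      refine le_csInf (hne.image _) ?_
      rintro _ ⟨μ, hμ, rfl⟩
      exact add_sub_le_measureReal_inter_of_mem_core hA hB hμ
    linarith
end

section
/- Let 𝓘 ⊆ 𝓕 be a class of sets containing ∅ and Ω, totally ordered by inclusion, with σ(𝓘) = 𝓕. Then for measurable sets B ⊆ A, the class 𝓘_{A,B} = { B ∩ (I ∩ A) : I ∈ 𝓘 } ∪ { B ∪ (I ∩ A) : I ∈ 𝓘 } contains ∅ and A, is totally ordered by inclusion, and generates the trace σ-algebra 𝓕|_A on A, i.e., σ_A(𝓘_{A,B}) = { F ∩ A : F ∈ 𝓕 }. -/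
/-!
Intersecting with `B` and taking the union with `B` are both monotone, and every intersection
lies below every union, so a chain `𝓘|_A` yields a chain `𝓘_{A,B}`. Since `∅ ∈ 𝓘` puts `B` itself
into `𝓘_{A,B}`, each trace `I ∩ A = (B ∩ (I ∩ A)) ∪ ((B ∪ (I ∩ A)) \ B)` is recovered from members of
`𝓘_{A,B}`, so `σ_A(𝓘_{A,B})` contains `σ_A(𝓘|_A) = 𝓕|_A`; the reverse inclusion holds because
all members of `𝓘_{A,B}` are measurable.
-/

open MeasureTheory Set

theorem MeasurableSet.of_inter_of_union {α : Type*} {m : MeasurableSpace α} {B X : Set α}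
    (hB : MeasurableSet[m] B) (hinter : MeasurableSet[m] (B ∩ X))
    (hunion : MeasurableSet[m] (B ∪ X)) : MeasurableSet[m] X := by
  rw [← inter_union_sdiff X B, inter_comm, ← union_sdiff_left]
  exact hinter.union (hunion.diff hB)

section InsertionFamily

variable {Ω : Type*}

/-- The class `𝓘_{A,B}` of the paper. -/
def insertionFamily (I : Set (Set Ω)) (A B : Set Ω) : Set (Set Ω) :=
  {S | ∃ J ∈ I, S = B ∩ (J ∩ A)} ∪ {S | ∃ J ∈ I, S = B ∪ J ∩ A}

variable {I : Set (Set Ω)} {A B : Set Ω}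

theorem empty_mem_insertionFamily (h0 : ∅ ∈ I) : ∅ ∈ insertionFamily I A B :=
  Or.inl ⟨∅, h0, by simp⟩

theorem inserted_mem_insertionFamily (h0 : ∅ ∈ I) : B ∈ insertionFamily I A B :=
  Or.inr ⟨∅, h0, by simp⟩

theorem ambient_mem_insertionFamily (hU : univ ∈ I) (hBA : B ⊆ A) : A ∈ insertionFamily I A B :=
  Or.inr ⟨univ, hU, by simp [union_eq_self_of_subset_left hBA]⟩

theorem insertionFamily_total (hchain : ∀ I₁ ∈ I, ∀ I₂ ∈ I, I₁ ⊆ I₂ ∨ I₂ ⊆ I₁) :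
    ∀ S₁ ∈ insertionFamily I A B, ∀ S₂ ∈ insertionFamily I A B, S₁ ⊆ S₂ ∨ S₂ ⊆ S₁ := by
  rintro S₁ (⟨J₁, hJ₁, rfl⟩ | ⟨J₁, hJ₁, rfl⟩) S₂ (⟨J₂, hJ₂, rfl⟩ | ⟨J₂, hJ₂, rfl⟩)
  · exact (hchain J₁ hJ₁ J₂ hJ₂).imp (fun h ↦ by gcongr) (fun h ↦ by gcongr)
  · exact Or.inl (inter_subset_left.trans subset_union_left)
  · exact Or.inr (inter_subset_left.trans subset_union_left)
  · exact (hchain J₁ hJ₁ J₂ hJ₂).imp (fun h ↦ by gcongr) (fun h ↦ by gcongr)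

theorem measurableSet_of_mem_insertionFamily {m : MeasurableSpace Ω}
    (hI : ∀ J ∈ I, MeasurableSet[m] J) (hA : MeasurableSet[m] A) (hB : MeasurableSet[m] B)
    {S : Set Ω} (hS : S ∈ insertionFamily I A B) : MeasurableSet[m] S := by
  rcases hS with ⟨J, hJ, rfl⟩ | ⟨J, hJ, rfl⟩
  · exact hB.inter ((hI J hJ).inter hA)
  · exact hB.union ((hI J hJ).inter hA)

theorem generateFrom_preimage_insertionFamily (h0 : ∅ ∈ I)
    (hA : MeasurableSet[MeasurableSpace.generateFrom I] A)
    (hB : MeasurableSet[MeasurableSpace.generateFrom I] B) :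
    MeasurableSpace.generateFrom ((fun S : Set Ω => ((↑) ⁻¹' S : Set A)) '' insertionFamily I A B)
      = MeasurableSpace.comap (↑· : A → Ω) (MeasurableSpace.generateFrom I) := by
  apply le_antisymm
  · refine MeasurableSpace.generateFrom_le ?_
    rintro _ ⟨S, hS, rfl⟩
    exact ⟨S, measurableSet_of_mem_insertionFamily
      (fun _ ↦ MeasurableSpace.measurableSet_generateFrom) hA hB hS, rfl⟩
  · rw [MeasurableSpace.comap_generateFrom]
    refine MeasurableSpace.generateFrom_le ?_
    rintro _ ⟨J, hJ, rfl⟩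
    have hmem : ∀ S ∈ insertionFamily I A B, MeasurableSet[MeasurableSpace.generateFrom
        ((fun S : Set Ω => ((↑) ⁻¹' S : Set A)) '' insertionFamily I A B)] ((↑) ⁻¹' S) :=
      fun S hS ↦ MeasurableSpace.measurableSet_generateFrom (mem_image_of_mem _ hS)
    rw [← Subtype.preimage_coe_inter_self]
    refine MeasurableSet.of_inter_of_union (hmem B (inserted_mem_insertionFamily h0)) ?_ ?_
    · exact hmem _ (Or.inl ⟨J, hJ, rfl⟩)
    · exact hmem _ (Or.inr ⟨J, hJ, rfl⟩)

end InsertionFamily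

theorem insertion_lemma {Ω : Type*} [m : MeasurableSpace Ω] (I : Set (Set Ω))
    (h0 : ∅ ∈ I) (hU : Set.univ ∈ I)
    (hchain : ∀ I₁ ∈ I, ∀ I₂ ∈ I, I₁ ⊆ I₂ ∨ I₂ ⊆ I₁)
    (hgen : MeasurableSpace.generateFrom I = m)
    (A B : Set Ω) (hA : MeasurableSet A) (hB : MeasurableSet B) (hBA : B ⊆ A) :
    (∅ ∈ ({S | ∃ J ∈ I, S = B ∩ (J ∩ A)} ∪ {S | ∃ J ∈ I, S = B ∪ J ∩ A} : Set (Set Ω))) ∧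
    (A ∈ ({S | ∃ J ∈ I, S = B ∩ (J ∩ A)} ∪ {S | ∃ J ∈ I, S = B ∪ J ∩ A} : Set (Set Ω))) ∧
    (∀ S₁ ∈ ({S | ∃ J ∈ I, S = B ∩ (J ∩ A)} ∪ {S | ∃ J ∈ I, S = B ∪ J ∩ A} : Set (Set Ω)),
      ∀ S₂ ∈ ({S | ∃ J ∈ I, S = B ∩ (J ∩ A)} ∪ {S | ∃ J ∈ I, S = B ∪ J ∩ A} : Set (Set Ω)),
        S₁ ⊆ S₂ ∨ S₂ ⊆ S₁) ∧
    MeasurableSpace.generateFrom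
        ((fun S : Set Ω => ((↑) ⁻¹' S : Set A)) ''
          ({S | ∃ J ∈ I, S = B ∩ (J ∩ A)} ∪ {S | ∃ J ∈ I, S = B ∪ J ∩ A}))
      = MeasurableSpace.comap (↑· : A → Ω) m := by
  subst hgen
  exact ⟨empty_mem_insertionFamily h0, ambient_mem_insertionFamily hU hBA,
    insertionFamily_total hchain, generateFrom_preimage_insertionFamily h0 hA hB⟩
end

section
/- If 𝓘 is a class of subsets totally ordered by inclusion containing ∅ and Ω, then the collection of all finite disjoint unions ⋃ᵢ₌₁ⁿ (Cᵢ \ Dᵢ) with C₁ ⊇ D₁ ⊇ C₂ ⊇ ⋯ ⊇ Dₙ, Cᵢ, Dᵢ ∈ 𝓘, is a Boolean algebra of sets (closed under complements and finite unions, containing ∅ and Ω), and it is the smallest algebra of sets containing 𝓘. -/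
/-!
Being a chain, `I` is closed under `∩` and `∪`. Hence intersecting every set of a nested chain
with `A ∈ I`, or joining `F ∈ I` to every set of it, gives again a nested chain, representing
`S ∩ A` resp. `S \ F`; and a chain whose sets `D i` all contain `F` can be followed by one whose
sets `C j` all lie in `F`. Splitting off the first piece, `S = (C 0 \ D 0) ∪ S'` with `S' ⊆ D 0`,
gives `Sᶜ = (Ω \ C 0) ∪ (S'ᶜ ∩ D 0)` and `T ∩ S = ((T ∩ C 0) \ D 0) ∪ ((T ∩ S') ∩ D 0)`, both of
this concatenable shape, so closure under complements and intersections follows by induction on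
the length of the chain.
-/

open Set

/-- Finite disjoint unions `⋃ i < n, C i \ D i` over nested chains
`C 0 ⊇ D 0 ⊇ C 1 ⊇ ⋯ ⊇ D (n-1)` of members of `I`. -/
def chainAlgebra {Ω : Type*} (I : Set (Set Ω)) : Set (Set Ω) :=
  {S | ∃ (n : ℕ) (C D : ℕ → Set Ω),
    (∀ i < n, C i ∈ I) ∧ (∀ i < n, D i ∈ I) ∧
    (∀ i < n, D i ⊆ C i) ∧ (∀ i, i + 1 < n → C (i + 1) ⊆ D i) ∧
    S = ⋃ i ∈ Finset.range n, C i \ D i}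

open MeasureTheory

theorem IsChain.isSublattice {α : Type*} [Lattice α] {s : Set α} (hs : IsChain (· ≤ ·) s) :
    IsSublattice s where
  supClosed a ha b hb := by
    rcases hs.total ha hb with h | h
    · rwa [sup_eq_right.2 h]
    · rwa [sup_eq_left.2 h]
  infClosed a ha b hb := by
    rcases hs.total ha hb with h | h
    · rwa [inf_eq_left.2 h]
    · rwa [inf_eq_right.2 h]

section ChainAlgebra

variable {Ω : Type*} {I : Set (Set Ω)} {n m : ℕ} {C D C' D' : ℕ → Set Ω} {A B F S T : Set Ω}

structure IsNestedChain (I : Set (Set Ω)) (n : ℕ) (C D : ℕ → Set Ω) : Prop where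
  C_mem : ∀ i < n, C i ∈ I
  D_mem : ∀ i < n, D i ∈ I
  D_subset : ∀ i < n, D i ⊆ C i
  C_succ_subset : ∀ i, i + 1 < n → C (i + 1) ⊆ D i

def chainUnion (n : ℕ) (C D : ℕ → Set Ω) : Set Ω := ⋃ i < n, C i \ D i

theorem mem_chainAlgebra_iff :
    S ∈ chainAlgebra I ↔ ∃ n C D, IsNestedChain I n C D ∧ S = chainUnion n C D := by
  simp only [chainAlgebra, chainUnion, Finset.mem_range, mem_ofPred_eq]
  constructor
  · rintro ⟨n, C, D, hC, hD, hDC, hCD, rfl⟩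
    exact ⟨n, C, D, ⟨hC, hD, hDC, hCD⟩, rfl⟩
  · rintro ⟨n, C, D, ⟨hC, hD, hDC, hCD⟩, rfl⟩
    exact ⟨n, C, D, hC, hD, hDC, hCD, rfl⟩

namespace IsNestedChain

theorem tail (h : IsNestedChain I (n + 1) C D) :
    IsNestedChain I n (fun i => C (i + 1)) (fun i => D (i + 1)) where
  C_mem i _ := h.C_mem (i + 1) (by omega)
  D_mem i _ := h.D_mem (i + 1) (by omega)
  D_subset i _ := h.D_subset (i + 1) (by omega)
  C_succ_subset i _ := h.C_succ_subset (i + 1) (by omega)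

theorem succ_subset_D_zero (h : IsNestedChain I (n + 1) C D) : ∀ i < n, C (i + 1) ⊆ D 0
  | 0, _ => h.C_succ_subset 0 (by omega)
  | i + 1, hi => (h.C_succ_subset (i + 1) (by omega)).trans <|
      (h.D_subset (i + 1) (by omega)).trans (succ_subset_D_zero h i (by omega))

theorem map {φ : Set Ω → Set Ω} (h : IsNestedChain I n C D) (hφ : Monotone φ)
    (hφI : MapsTo φ I I) : IsNestedChain I n (φ ∘ C) (φ ∘ D) where
  C_mem i hi := hφI (h.C_mem i hi)
  D_mem i hi := hφI (h.D_mem i hi)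
  D_subset i hi := hφ (h.D_subset i hi)
  C_succ_subset i hi := hφ (h.C_succ_subset i hi)

theorem append (h : IsNestedChain I n C D) (h' : IsNestedChain I m C' D')
    (hD : ∀ i < n, F ⊆ D i) (hC' : ∀ j < m, C' j ⊆ F) :
    IsNestedChain I (n + m) (fun i => if i < n then C i else C' (i - n))
      (fun i => if i < n then D i else D' (i - n)) where
  C_mem i hi := by
    split_ifs with hin
    · exact h.C_mem i hin
    · exact h'.C_mem (i - n) (by omega)
  D_mem i hi := by
    split_ifs with hin
    · exact h.D_mem i hin
    · exact h'.D_mem (i - n) (by omega)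
  D_subset i hi := by
    split_ifs with hin
    · exact h.D_subset i hin
    · exact h'.D_subset (i - n) (by omega)
  C_succ_subset i hi := by
    split_ifs with hsucc
    · exact h.C_succ_subset i hsucc
    · omega
    · exact (hC' _ (by omega)).trans (hD i (by omega))
    · rw [show i + 1 - n = i - n + 1 by omega]
      exact h'.C_succ_subset (i - n) (by omega)

end IsNestedChain

theorem chainUnion_zero : chainUnion 0 C D = ∅ := by
  simp [chainUnion]

theorem chainUnion_succ :
    chainUnion (n + 1) C D = (C 0 \ D 0) ∪ chainUnion n (fun i => C (i + 1)) (fun i => D (i + 1)) :=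
  biUnion_lt_succ' _ n

theorem chainUnion_subset (h : ∀ i < n, C i ⊆ B) : chainUnion n C D ⊆ B :=
  iUnion₂_subset fun i hi => sdiff_subset.trans (h i hi)

theorem chainUnion_inter :
    chainUnion n (fun i => C i ∩ A) (fun i => D i ∩ A) = chainUnion n C D ∩ A := by
  simp only [chainUnion, iUnion₂_inter, inter_sdiff_distrib_right]

theorem chainUnion_union :
    chainUnion n (fun i => C i ∪ F) (fun i => D i ∪ F) = chainUnion n C D \ F := by
  have h (X Y : Set Ω) : (X ∪ F) \ (Y ∪ F) = (X \ Y) \ F := by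
    ext
    simp only [mem_sdiff, mem_union]
    tauto
  simp only [chainUnion, h, iUnion_sdiff]

theorem chainUnion_append :
    chainUnion (n + m) (fun i => if i < n then C i else C' (i - n))
      (fun i => if i < n then D i else D' (i - n)) = chainUnion n C D ∪ chainUnion m C' D' := by
  ext x
  simp only [chainUnion, mem_iUnion, mem_union, exists_prop]
  constructor
  · rintro ⟨i, hi, hx⟩
    split_ifs at hx with hin
    · exact Or.inl ⟨i, hin, hx⟩
    · exact Or.inr ⟨i - n, by omega, hx⟩
  · rintro (⟨i, hi, hx⟩ | ⟨j, hj, hx⟩)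
    · exact ⟨i, by omega, by simpa [hi] using hx⟩
    · exact ⟨n + j, by omega, by simpa using hx⟩

def chainAlgebraBelow (I : Set (Set Ω)) (B : Set Ω) : Set (Set Ω) :=
  {S | ∃ n C D, IsNestedChain I n C D ∧ (∀ i < n, C i ⊆ B) ∧ S = chainUnion n C D}

def chainAlgebraAbove (I : Set (Set Ω)) (B : Set Ω) : Set (Set Ω) :=
  {S | ∃ n C D, IsNestedChain I n C D ∧ (∀ i < n, B ⊆ D i) ∧ S = chainUnion n C D}

theorem chainAlgebraBelow_subset_chainAlgebra : chainAlgebraBelow I B ⊆ chainAlgebra I :=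
  fun _ ⟨n, C, D, hCD, _, hS⟩ => mem_chainAlgebra_iff.2 ⟨n, C, D, hCD, hS⟩

theorem chainAlgebraBelow_mono {B' : Set Ω} (hB : B ⊆ B') :
    chainAlgebraBelow I B ⊆ chainAlgebraBelow I B' :=
  fun _ ⟨n, C, D, hCD, hC, hS⟩ => ⟨n, C, D, hCD, fun i hi => (hC i hi).trans hB, hS⟩

theorem inter_mem_chainAlgebraBelow (hI : InfClosed I) (hS : S ∈ chainAlgebra I) (hA : A ∈ I) :
    S ∩ A ∈ chainAlgebraBelow I A := by
  obtain ⟨n, C, D, hCD, rfl⟩ := mem_chainAlgebra_iff.1 hS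
  exact ⟨n, _, _, hCD.map (fun _ _ h => inter_subset_inter_left A h) (fun _ hX => hI hX hA),
    fun _ _ => inter_subset_right, chainUnion_inter.symm⟩

theorem sdiff_mem_chainAlgebraAbove (hI : SupClosed I) (hS : S ∈ chainAlgebra I) (hF : F ∈ I) :
    S \ F ∈ chainAlgebraAbove I F := by
  obtain ⟨n, C, D, hCD, rfl⟩ := mem_chainAlgebra_iff.1 hS
  exact ⟨n, _, _, hCD.map (fun _ _ h => union_subset_union_left F h) (fun _ hX => hI hX hF),
    fun _ _ => subset_union_right, chainUnion_union.symm⟩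

theorem union_mem_chainAlgebra_of_mem_above_of_mem_below (hS : S ∈ chainAlgebraAbove I F)
    (hT : T ∈ chainAlgebraBelow I F) : S ∪ T ∈ chainAlgebra I := by
  obtain ⟨n, C, D, hCD, hD, rfl⟩ := hS
  obtain ⟨m, C', D', hCD', hC', rfl⟩ := hT
  exact mem_chainAlgebra_iff.2 ⟨n + m, _, _, hCD.append hCD' hD hC', chainUnion_append.symm⟩

theorem empty_mem_chainAlgebra : ∅ ∈ chainAlgebra I :=
  mem_chainAlgebra_iff.2 ⟨0, fun _ => ∅, fun _ => ∅,
    ⟨nofun, nofun, nofun, fun _ _ => by omega⟩, chainUnion_zero.symm⟩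

theorem sdiff_mem_chainAlgebra {E : Set Ω} (hE : E ∈ I) (hF : F ∈ I) (hFE : F ⊆ E) :
    E \ F ∈ chainAlgebra I :=
  mem_chainAlgebra_iff.2 ⟨1, fun _ => E, fun _ => F,
    ⟨fun _ _ => hE, fun _ _ => hF, fun _ _ => hFE, fun _ _ => by omega⟩, by simp [chainUnion]⟩

theorem mem_chainAlgebra_of_mem (h0 : ∅ ∈ I) (hA : A ∈ I) : A ∈ chainAlgebra I := by
  simpa using sdiff_mem_chainAlgebra hA h0 (empty_subset A)

theorem IsNestedChain.compl_chainUnion_mem (hI : IsSublattice I) (h0 : ∅ ∈ I) (hU : univ ∈ I)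
    (hCD : IsNestedChain I n C D) : (chainUnion n C D)ᶜ ∈ chainAlgebra I := by
  induction n generalizing C D with
  | zero => simpa [chainUnion_zero] using mem_chainAlgebra_of_mem h0 hU
  | succ n ih =>
    set S := chainUnion n (fun i => C (i + 1)) (fun i => D (i + 1))
    have hSD : S ⊆ D 0 := chainUnion_subset hCD.succ_subset_D_zero
    have hDC : D 0 ⊆ C 0 := hCD.D_subset 0 (by omega)
    have hcompl : (chainUnion (n + 1) C D)ᶜ = (univ \ C 0) ∪ (Sᶜ ∩ D 0) := by
      rw [chainUnion_succ]
      ext x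
      have := @hSD x
      have := @hDC x
      simp only [mem_compl_iff, mem_union, mem_sdiff, mem_inter_iff, mem_univ, true_and]
      tauto
    rw [hcompl]
    exact union_mem_chainAlgebra_of_mem_above_of_mem_below
      (sdiff_mem_chainAlgebraAbove hI.supClosed (mem_chainAlgebra_of_mem h0 hU)
        (hCD.C_mem 0 (by omega)))
      (chainAlgebraBelow_mono hDC
        (inter_mem_chainAlgebraBelow hI.infClosed (ih hCD.tail) (hCD.D_mem 0 (by omega))))

theorem compl_mem_chainAlgebra (hI : IsSublattice I) (h0 : ∅ ∈ I) (hU : univ ∈ I)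
    (hS : S ∈ chainAlgebra I) : Sᶜ ∈ chainAlgebra I := by
  obtain ⟨n, C, D, hCD, rfl⟩ := mem_chainAlgebra_iff.1 hS
  exact hCD.compl_chainUnion_mem hI h0 hU

theorem IsNestedChain.inter_chainUnion_mem (hI : IsSublattice I) (hS : S ∈ chainAlgebra I)
    (hCD : IsNestedChain I n C D) : S ∩ chainUnion n C D ∈ chainAlgebra I := by
  induction n generalizing C D with
  | zero => simpa [chainUnion_zero] using empty_mem_chainAlgebra
  | succ n ih =>
    set T := chainUnion n (fun i => C (i + 1)) (fun i => D (i + 1))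
    have hTD : T ⊆ D 0 := chainUnion_subset hCD.succ_subset_D_zero
    have hinter : S ∩ chainUnion (n + 1) C D = ((S ∩ C 0) \ D 0) ∪ ((S ∩ T) ∩ D 0) := by
      rw [chainUnion_succ]
      ext x
      have := @hTD x
      simp only [mem_union, mem_sdiff, mem_inter_iff]
      tauto
    rw [hinter]
    have hD0 : D 0 ∈ I := hCD.D_mem 0 (by omega)
    exact union_mem_chainAlgebra_of_mem_above_of_mem_below
      (sdiff_mem_chainAlgebraAbove hI.supClosed (chainAlgebraBelow_subset_chainAlgebra
        (inter_mem_chainAlgebraBelow hI.infClosed hS (hCD.C_mem 0 (by omega)))) hD0)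
      (inter_mem_chainAlgebraBelow hI.infClosed (ih hCD.tail) hD0)

theorem inter_mem_chainAlgebra (hI : IsSublattice I) (hS : S ∈ chainAlgebra I)
    (hT : T ∈ chainAlgebra I) : S ∩ T ∈ chainAlgebra I := by
  obtain ⟨n, C, D, hCD, rfl⟩ := mem_chainAlgebra_iff.1 hT
  exact hCD.inter_chainUnion_mem hI hS

theorem isSetAlgebra_chainAlgebra (hI : IsSublattice I) (h0 : ∅ ∈ I) (hU : univ ∈ I) :
    IsSetAlgebra (chainAlgebra I) where
  empty_mem := empty_mem_chainAlgebra
  compl_mem _ hS := compl_mem_chainAlgebra hI h0 hU hS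
  union_mem S T hS hT := by
    rw [union_eq_compl_compl_inter_compl]
    exact compl_mem_chainAlgebra hI h0 hU <| inter_mem_chainAlgebra hI
      (compl_mem_chainAlgebra hI h0 hU hS) (compl_mem_chainAlgebra hI h0 hU hT)

theorem chainAlgebra_subset {𝒜 : Set (Set Ω)} (h𝒜 : IsSetAlgebra 𝒜) (hI : I ⊆ 𝒜) :
    chainAlgebra I ⊆ 𝒜 := by
  rintro _ ⟨n, C, D, hC, hD, -, -, rfl⟩
  exact h𝒜.biUnion_mem _ fun i hi =>
    h𝒜.sdiff_mem (hI (hC i (Finset.mem_range.1 hi))) (hI (hD i (Finset.mem_range.1 hi)))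

end ChainAlgebra

theorem chainAlgebra_isAlgebra {Ω : Type*} (I : Set (Set Ω))
    (h0 : ∅ ∈ I) (hU : Set.univ ∈ I)
    (hchain : ∀ I₁ ∈ I, ∀ I₂ ∈ I, I₁ ⊆ I₂ ∨ I₂ ⊆ I₁) :
    (∅ ∈ chainAlgebra I) ∧ (Set.univ ∈ chainAlgebra I) ∧
    (∀ S ∈ chainAlgebra I, Sᶜ ∈ chainAlgebra I) ∧
    (∀ S ∈ chainAlgebra I, ∀ T ∈ chainAlgebra I, S ∪ T ∈ chainAlgebra I) ∧
    I ⊆ chainAlgebra I ∧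
    (∀ 𝓐 : Set (Set Ω), Set.univ ∈ 𝓐 → (∀ S ∈ 𝓐, Sᶜ ∈ 𝓐) →
      (∀ S ∈ 𝓐, ∀ T ∈ 𝓐, S ∪ T ∈ 𝓐) → I ⊆ 𝓐 → chainAlgebra I ⊆ 𝓐) := by
  have hI : IsSublattice I := IsChain.isSublattice fun A hA B hB _ => hchain A hA B hB
  have hCA := isSetAlgebra_chainAlgebra hI h0 hU
  refine ⟨hCA.empty_mem, hCA.univ_mem, fun _ hS => hCA.compl_mem hS,
    fun _ hS _ => hCA.union_mem hS, fun _ => mem_chainAlgebra_of_mem h0,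
    fun 𝓐 hU𝓐 hcompl hunion hI𝓐 => chainAlgebra_subset ?_ hI𝓐⟩
  exact ⟨compl_univ (α := Ω) ▸ hcompl _ hU𝓐, fun S hS => hcompl S hS,
    fun S T hS hT => hunion S hS T hT⟩
end

section
/- Let 𝓘 be totally ordered by inclusion with ∅, Ω ∈ 𝓘, and let v : 𝓙 → ℝ be defined on the algebra 𝓙 generated by 𝓘 by μ(⋃ᵢ₌₁ⁿ (Cᵢ \ Dᵢ)) = Σᵢ (v(Cᵢ) − v(Dᵢ)) for nested chains C₁ ⊇ D₁ ⊇ ⋯ ⊇ Dₙ in 𝓘, where v is non-decreasing on 𝓘. Then μ is well-defined, nonnegative, and finitely additive on 𝓙. -/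
open Set

/-!
Send each `S ⊆ Ω` to the set of reals `valueSet I v S`, the union of the intervals
`(v K, v J]` over all `J, K ∈ I` with `J \ K ⊆ S`. Because `I` is a chain, for a finite union of
differences `C i \ D i` of members of `I` this is exactly `⋃ i, (v (D i), v (C i)]`, and disjoint
differences give disjoint intervals. Hence `μ S`, the Lebesgue measure of `valueSet I v S`, is
defined from `S` alone, is finitely additive, and on a nested chain equals
`∑ i, (v (C i) - v (D i))`.
-/

open MeasureTheory

namespace ChainPremeasure

variable {Ω ι κ : Type*} {I : Set (Set Ω)} {v : Set Ω → ℝ}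

def valueSet (I : Set (Set Ω)) (v : Set Ω → ℝ) (S : Set Ω) : Set ℝ :=
  {x | ∃ J ∈ I, ∃ K ∈ I, J \ K ⊆ S ∧ x ∈ Ioc (v K) (v J)}

theorem exists_forall_subset_of_isChain (hI : IsChain (· ⊆ ·) I) {s : Finset ι}
    (hs : s.Nonempty) {C : ι → Set Ω} (hC : ∀ i ∈ s, C i ∈ I) :
    ∃ i₀ ∈ s, ∀ i ∈ s, C i ⊆ C i₀ := by
  have : Nonempty s := hs.coe_sort
  have hdir : Directed (· ⊆ ·) fun i : s => C i := fun i j =>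
    (hI.total (hC i i.2) (hC j j.2)).elim (fun h => ⟨j, h, subset_rfl⟩)
      fun h => ⟨i, subset_rfl, h⟩
  obtain ⟨i₀, hi₀⟩ := hdir.finset_le s.attach
  exact ⟨i₀, i₀.2, fun i hi => hi₀ ⟨i, hi⟩ (Finset.mem_attach _ _)⟩

theorem Ioc_subset_biUnion_of_diff_subset (hI : IsChain (· ⊆ ·) I) (hv : MonotoneOn v I)
    {s : Finset ι} {C D : ι → Set Ω} (hC : ∀ i ∈ s, C i ∈ I) (hD : ∀ i ∈ s, D i ∈ I)
    {J K : Set Ω} (hJ : J ∈ I) (hK : K ∈ I) (hcov : J \ K ⊆ ⋃ i ∈ s, C i \ D i) :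
    Ioc (v K) (v J) ⊆ ⋃ i ∈ s, Ioc (v (D i)) (v (C i)) := by
  classical
  intro x hx
  induction s using Finset.strongInduction generalizing J with
  | H s ih =>
  have hJK : ¬ J ⊆ K := fun h => (hx.1.trans_le hx.2).not_ge (hv hJ hK h)
  obtain rfl | hs := s.eq_empty_or_nonempty
  · simp only [Finset.notMem_empty, iUnion_of_empty, iUnion_empty, subset_empty_iff,
      sdiff_eq_empty] at hcov
    exact absurd hcov hJK
  obtain ⟨i₀, hi₀, hmax⟩ := exists_forall_subset_of_isChain hI hs hC
  have hJKC : J ⊆ K ∪ C i₀ :=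
    sdiff_subset_iff.mp (hcov.trans (iUnion₂_subset fun i hi => sdiff_subset.trans (hmax i hi)))
  have hJC : J ⊆ C i₀ := by
    rcases hI.total hK (hC i₀ hi₀) with hKC | hCK
    · exact hJKC.trans (union_subset hKC subset_rfl)
    · exact absurd (hJKC.trans (union_subset subset_rfl hCK)) hJK
  by_cases hxD : v (D i₀) < x
  · exact mem_biUnion hi₀ ⟨hxD, hx.2.trans (hv hJ (hC i₀ hi₀) hJC)⟩
  -- Otherwise replace `J` by the smaller of `J` and `D i₀`; the block `C i₀ \ D i₀` is then
  -- no longer needed to cover, and induction applies.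
  obtain ⟨J', hJ', hJ'J, hJ'D, hxJ'⟩ : ∃ J' ∈ I, J' ⊆ J ∧ J' ⊆ D i₀ ∧ x ≤ v J' := by
    rcases hI.total hJ (hD i₀ hi₀) with h | h
    · exact ⟨J, hJ, subset_rfl, h, hx.2⟩
    · exact ⟨D i₀, hD i₀ hi₀, h, subset_rfl, not_lt.mp hxD⟩
  have hcov' : J' \ K ⊆ ⋃ i ∈ s.erase i₀, C i \ D i := by
    rintro y ⟨hyJ', hyK⟩
    obtain ⟨i, hi, hyi⟩ := mem_iUnion₂.mp (hcov ⟨hJ'J hyJ', hyK⟩)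
    exact mem_biUnion (Finset.mem_erase.mpr ⟨by rintro rfl; exact hyi.2 (hJ'D hyJ'), hi⟩) hyi
  obtain ⟨i, hi, hxi⟩ := mem_iUnion₂.mp <| ih _ (Finset.erase_ssubset hi₀)
    (fun i hi => hC i (Finset.mem_of_mem_erase hi)) (fun i hi => hD i (Finset.mem_of_mem_erase hi))
    hJ' hcov' ⟨hx.1, hxJ'⟩
  exact mem_biUnion (Finset.mem_of_mem_erase hi) hxi

theorem valueSet_biUnion_diff (hI : IsChain (· ⊆ ·) I) (hv : MonotoneOn v I)
    {s : Finset ι} {C D : ι → Set Ω} (hC : ∀ i ∈ s, C i ∈ I) (hD : ∀ i ∈ s, D i ∈ I) :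
    valueSet I v (⋃ i ∈ s, C i \ D i) = ⋃ i ∈ s, Ioc (v (D i)) (v (C i)) := by
  refine Subset.antisymm ?_ (iUnion₂_subset fun i hi x hx => ?_)
  · rintro x ⟨J, hJ, K, hK, hcov, hx⟩
    exact Ioc_subset_biUnion_of_diff_subset hI hv hC hD hJ hK hcov hx
  · exact ⟨C i, hC i hi, D i, hD i hi,
      Finset.subset_set_biUnion_of_mem (f := fun i => C i \ D i) hi, hx⟩

theorem disjoint_Ioc_of_disjoint_diff (hI : IsChain (· ⊆ ·) I) (hv : MonotoneOn v I)
    {C D C' D' : Set Ω} (hC : C ∈ I) (hD : D ∈ I) (hC' : C' ∈ I) (hD' : D' ∈ I)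
    (h : Disjoint (C \ D) (C' \ D')) : Disjoint (Ioc (v D) (v C)) (Ioc (v D') (v C')) := by
  wlog hC'C : C' ⊆ C generalizing C D C' D'
  · exact (this hC' hD' hC hD h.symm ((hI.total hC hC').resolve_right hC'C)).symm
  have hC'DD' : C' ⊆ D' ∪ D := sdiff_subset_iff.mp fun y hy =>
    by_contra fun hyD => disjoint_left.mp h ⟨hC'C hy.1, hyD⟩ hy
  rw [Set.disjoint_left]
  intro x hx hx'
  rcases hI.total hD hD' with hDD' | hD'D
  · linarith [hx'.1, hx'.2, hv hC' hD' (hC'DD'.trans (union_subset subset_rfl hDD'))]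
  · linarith [hx.1, hx'.2, hv hC' hD (hC'DD'.trans (union_subset hD'D subset_rfl))]

theorem disjoint_biUnion_Ioc_of_disjoint (hI : IsChain (· ⊆ ·) I) (hv : MonotoneOn v I)
    {s : Finset ι} {C D : ι → Set Ω} (hC : ∀ i ∈ s, C i ∈ I) (hD : ∀ i ∈ s, D i ∈ I)
    {t : Finset κ} {C' D' : κ → Set Ω} (hC' : ∀ j ∈ t, C' j ∈ I) (hD' : ∀ j ∈ t, D' j ∈ I)
    (h : Disjoint (⋃ i ∈ s, C i \ D i) (⋃ j ∈ t, C' j \ D' j)) :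
    Disjoint (⋃ i ∈ s, Ioc (v (D i)) (v (C i))) (⋃ j ∈ t, Ioc (v (D' j)) (v (C' j))) := by
  simp only [disjoint_iUnion_left, disjoint_iUnion_right]
  intro j hj i hi
  exact disjoint_Ioc_of_disjoint_diff hI hv (hC i hi) (hD i hi) (hC' j hj) (hD' j hj)
    (h.mono (Finset.subset_set_biUnion_of_mem (f := fun i => C i \ D i) hi)
      (Finset.subset_set_biUnion_of_mem (f := fun j => C' j \ D' j) hj))

theorem valueSet_union (hI : IsChain (· ⊆ ·) I) (hv : MonotoneOn v I)
    {s : Finset ι} {C D : ι → Set Ω} (hC : ∀ i ∈ s, C i ∈ I) (hD : ∀ i ∈ s, D i ∈ I)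
    {t : Finset κ} {C' D' : κ → Set Ω} (hC' : ∀ j ∈ t, C' j ∈ I) (hD' : ∀ j ∈ t, D' j ∈ I) :
    valueSet I v ((⋃ i ∈ s, C i \ D i) ∪ ⋃ j ∈ t, C' j \ D' j) =
      valueSet I v (⋃ i ∈ s, C i \ D i) ∪ valueSet I v (⋃ j ∈ t, C' j \ D' j) := by
  classical
  -- Reindex both families by the pairs `(C, D)` themselves, so that they can be merged.
  set P := s.image fun i => (C i, D i)
  set Q := t.image fun j => (C' j, D' j)
  have hS : ⋃ i ∈ s, C i \ D i = ⋃ p ∈ P, p.1 \ p.2 := by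
    simp only [P, Finset.set_biUnion_finset_image]
  have hT : ⋃ j ∈ t, C' j \ D' j = ⋃ p ∈ Q, p.1 \ p.2 := by
    simp only [Q, Finset.set_biUnion_finset_image]
  have hPQ : ∀ p ∈ P ∪ Q, p.1 ∈ I ∧ p.2 ∈ I := by
    simp only [P, Q, Finset.mem_union, Finset.mem_image]
    rintro _ (⟨i, hi, rfl⟩ | ⟨j, hj, rfl⟩)
    exacts [⟨hC i hi, hD i hi⟩, ⟨hC' j hj, hD' j hj⟩]
  have hval := fun (R : Finset (Set Ω × Set Ω)) (hR : R ⊆ P ∪ Q) =>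
    valueSet_biUnion_diff (v := v) hI hv (fun p hp => (hPQ p (hR hp)).1)
      fun p hp => (hPQ p (hR hp)).2
  rw [hS, hT, ← Finset.set_biUnion_union, hval _ subset_rfl, hval _ Finset.subset_union_left,
    hval _ Finset.subset_union_right, Finset.set_biUnion_union]

theorem measureReal_valueSet_biUnion_diff (hI : IsChain (· ⊆ ·) I) (hv : MonotoneOn v I)
    {s : Finset ι} {C D : ι → Set Ω} (hC : ∀ i ∈ s, C i ∈ I) (hD : ∀ i ∈ s, D i ∈ I)
    (hDC : ∀ i ∈ s, D i ⊆ C i) (hdisj : (s : Set ι).PairwiseDisjoint fun i => C i \ D i) :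
    volume.real (valueSet I v (⋃ i ∈ s, C i \ D i)) = ∑ i ∈ s, (v (C i) - v (D i)) := by
  rw [valueSet_biUnion_diff hI hv hC hD,
    measureReal_biUnion_finset (fun i hi j hj hij => disjoint_Ioc_of_disjoint_diff hI hv
      (hC i hi) (hD i hi) (hC j hj) (hD j hj) (hdisj hi hj hij))
      (fun _ _ => measurableSet_Ioc) fun _ _ => measure_Ioc_lt_top.ne]
  refine Finset.sum_congr rfl fun i hi => ?_
  rw [Real.volume_real_Ioc, max_eq_left (sub_nonneg.mpr (hv (hD i hi) (hC i hi) (hDC i hi)))]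

theorem measureReal_valueSet_union (hI : IsChain (· ⊆ ·) I) (hv : MonotoneOn v I)
    {s : Finset ι} {C D : ι → Set Ω} (hC : ∀ i ∈ s, C i ∈ I) (hD : ∀ i ∈ s, D i ∈ I)
    {t : Finset κ} {C' D' : κ → Set Ω} (hC' : ∀ j ∈ t, C' j ∈ I) (hD' : ∀ j ∈ t, D' j ∈ I)
    (h : Disjoint (⋃ i ∈ s, C i \ D i) (⋃ j ∈ t, C' j \ D' j)) :
    volume.real (valueSet I v ((⋃ i ∈ s, C i \ D i) ∪ ⋃ j ∈ t, C' j \ D' j)) =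
      volume.real (valueSet I v (⋃ i ∈ s, C i \ D i)) +
        volume.real (valueSet I v (⋃ j ∈ t, C' j \ D' j)) := by
  rw [valueSet_union hI hv hC hD hC' hD', valueSet_biUnion_diff hI hv hC hD,
    valueSet_biUnion_diff hI hv hC' hD']
  exact measureReal_union (disjoint_biUnion_Ioc_of_disjoint hI hv hC hD hC' hD' h)
    (Finset.measurableSet_biUnion _ fun _ _ => measurableSet_Ioc)
    (measure_biUnion_lt_top s.finite_toSet fun _ _ => measure_Ioc_lt_top).ne
    (measure_biUnion_lt_top t.finite_toSet fun _ _ => measure_Ioc_lt_top).ne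

theorem subset_of_lt_of_nested {n : ℕ} {C D : ℕ → Set Ω} (hDC : ∀ i < n, D i ⊆ C i)
    (hCD : ∀ i, i + 1 < n → C (i + 1) ⊆ D i) {i j : ℕ} (hij : i < j) (hj : j < n) :
    C j ⊆ D i := by
  induction j, hij using Nat.le_induction with
  | base => exact hCD i hj
  | succ j hij ih => exact (hCD j hj).trans ((hDC j (by omega)).trans (ih (by omega)))

theorem pairwiseDisjoint_diff_of_nested {n : ℕ} {C D : ℕ → Set Ω} (hDC : ∀ i < n, D i ⊆ C i)
    (hCD : ∀ i, i + 1 < n → C (i + 1) ⊆ D i) :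
    (↑(Finset.range n) : Set ℕ).PairwiseDisjoint fun i => C i \ D i := by
  have key : ∀ i j, i < j → j < n → Disjoint (C i \ D i) (C j \ D j) := fun i j hij hj =>
    disjoint_sdiff_left.mono_right (sdiff_subset.trans (subset_of_lt_of_nested hDC hCD hij hj))
  intro i hi j hj hij
  simp only [Finset.coe_range, mem_Iio] at hi hj
  rcases hij.lt_or_gt with h | h
  exacts [key i j h hj, (key j i h hi).symm]

end ChainPremeasure

open ChainPremeasure

theorem chain_premeasure_well_defined_general {Ω : Type*} (I : Set (Set Ω))
    (hchain : ∀ I₁ ∈ I, ∀ I₂ ∈ I, I₁ ⊆ I₂ ∨ I₂ ⊆ I₁)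
    (v : Set Ω → ℝ)
    (hmono : ∀ S ∈ I, ∀ T ∈ I, S ⊆ T → v S ≤ v T) :
    ∃ μ : Set Ω → ℝ,
      (∀ (n : ℕ) (C D : ℕ → Set Ω), (∀ i < n, C i ∈ I) → (∀ i < n, D i ∈ I) →
        (∀ i < n, D i ⊆ C i) → (∀ i, i + 1 < n → C (i + 1) ⊆ D i) →
        μ (⋃ i ∈ Finset.range n, C i \ D i)
          = ∑ i ∈ Finset.range n, (v (C i) - v (D i))) ∧
      (∀ S ∈ chainAlgebra I, 0 ≤ μ S) ∧
      (∀ S ∈ chainAlgebra I, ∀ T ∈ chainAlgebra I, Disjoint S T →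
        μ (S ∪ T) = μ S + μ T) := by
  have hI : IsChain (· ⊆ ·) I := fun J hJ K hK _ => hchain J hJ K hK
  have hv : MonotoneOn v I := hmono
  refine ⟨fun S => volume.real (valueSet I v S), ?_, fun _ _ => measureReal_nonneg, ?_⟩
  · intro n C D hC hD hDC hCD
    exact measureReal_valueSet_biUnion_diff hI hv (fun i hi => hC i (Finset.mem_range.mp hi))
      (fun i hi => hD i (Finset.mem_range.mp hi)) (fun i hi => hDC i (Finset.mem_range.mp hi))
      (pairwiseDisjoint_diff_of_nested hDC hCD)
  · rintro _ ⟨n, C, D, hC, hD, -, -, rfl⟩ _ ⟨m, C', D', hC', hD', -, -, rfl⟩ hST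
    exact measureReal_valueSet_union hI hv (fun i hi => hC i (Finset.mem_range.mp hi))
      (fun i hi => hD i (Finset.mem_range.mp hi)) (fun j hj => hC' j (Finset.mem_range.mp hj))
      (fun j hj => hD' j (Finset.mem_range.mp hj)) hST

theorem chain_premeasure_well_defined {Ω : Type*} (I : Set (Set Ω))
    (h0 : ∅ ∈ I) (hU : Set.univ ∈ I)
    (hchain : ∀ I₁ ∈ I, ∀ I₂ ∈ I, I₁ ⊆ I₂ ∨ I₂ ⊆ I₁)
    (v : Set Ω → ℝ) (hv0 : v ∅ = 0)
    (hmono : ∀ S ∈ I, ∀ T ∈ I, S ⊆ T → v S ≤ v T) :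
    ∃ μ : Set Ω → ℝ,
      (∀ (n : ℕ) (C D : ℕ → Set Ω), (∀ i < n, C i ∈ I) → (∀ i < n, D i ∈ I) →
        (∀ i < n, D i ⊆ C i) → (∀ i, i + 1 < n → C (i + 1) ⊆ D i) →
        μ (⋃ i ∈ Finset.range n, C i \ D i)
          = ∑ i ∈ Finset.range n, (v (C i) - v (D i))) ∧
      (∀ S ∈ chainAlgebra I, 0 ≤ μ S) ∧
      (∀ S ∈ chainAlgebra I, ∀ T ∈ chainAlgebra I, Disjoint S T →
        μ (S ∪ T) = μ S + μ T) :=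
  chain_premeasure_well_defined_general I hchain v hmono
end

section
/- Let (Ω,𝓕) be a measurable space admitting a class 𝓘 ⊆ 𝓕 containing ∅ and Ω, totally ordered by inclusion, with σ(𝓘) = 𝓕. Let v : 𝓕 → ℝ be submodular (non-decreasing, continuous along monotone sequences, v(∅)=0, v(A)+v(B) ≥ v(A∪B)+v(A∩B)). Then for any measurable B ⊆ A there exists a unique finite measure μ on (A, 𝓕|_A) such that μ(I) = v(I) for all I ∈ 𝓘_{A,B}, and this μ satisfies μ(A) = v(A), μ(B) = v(B), and μ(E) ≤ v(E) for all measurable E ⊆ A. -/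
open MeasureTheory Set Filter Topology

def IsSubmodular {Ω : Type*} [MeasurableSpace Ω] (v : Set Ω → ℝ) : Prop :=
  v ∅ = 0 ∧
  (∀ A B : Set Ω, MeasurableSet A → MeasurableSet B → A ⊆ B → v A ≤ v B) ∧
  (∀ A : ℕ → Set Ω, (∀ n, MeasurableSet (A n)) → Monotone A →
    Tendsto (fun n => v (A n)) atTop (nhds (v (⋃ n, A n)))) ∧
  (∀ A : ℕ → Set Ω, (∀ n, MeasurableSet (A n)) → Antitone A →
    Tendsto (fun n => v (A n)) atTop (nhds (v (⋂ n, A n)))) ∧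
  (∀ A B : Set Ω, MeasurableSet A → MeasurableSet B →
    v (A ∪ B) + v (A ∩ B) ≤ v A + v B)

def IsSupermodular {Ω : Type*} [MeasurableSpace Ω] (v : Set Ω → ℝ) : Prop :=
  v ∅ = 0 ∧
  (∀ A B : Set Ω, MeasurableSet A → MeasurableSet B → A ⊆ B → v A ≤ v B) ∧
  (∀ A : ℕ → Set Ω, (∀ n, MeasurableSet (A n)) → Monotone A →
    Tendsto (fun n => v (A n)) atTop (nhds (v (⋃ n, A n)))) ∧
  (∀ A : ℕ → Set Ω, (∀ n, MeasurableSet (A n)) → Antitone A →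
    Tendsto (fun n => v (A n)) atTop (nhds (v (⋂ n, A n)))) ∧
  (∀ A B : Set Ω, MeasurableSet A → MeasurableSet B →
    v A + v B ≤ v (A ∪ B) + v (A ∩ B))

/-!
A countable subchain `T` of the chain `𝓘_{A,B}` consists of lower level sets of a single measurable
`F : Ω → ℝ`. Pulled back along `F` (and intersected with `A`), `v` becomes a submodular function `w`
on the Borel sets of `ℝ`, and `x ↦ w (Iic x)` is a Stieltjes function. Its measure agrees with `w`
on lower sets, and submodularity makes it dominated by `w`: first on unions of dyadic intervals,
by telescoping, then on compact sets by continuity of `w` along decreasing sequences, and finally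
on all Borel sets by inner regularity. Transported back to `σ(T)` these measures are unique by the
π-λ theorem, hence compatible, and glue to a measure on `σ(𝓘_{A,B})`, which contains the trace
on `A` of every measurable set. Uniqueness is once more the π-λ theorem on the chain.
-/

open scoped ENNReal

open MeasurableSpace

namespace IsSubmodular

variable {Ω : Type*} [MeasurableSpace Ω] {v : Set Ω → ℝ}

lemma empty (hv : IsSubmodular v) : v ∅ = 0 := hv.1

lemma mono (hv : IsSubmodular v) {S T : Set Ω} (hS : MeasurableSet S) (hT : MeasurableSet T)
    (hST : S ⊆ T) : v S ≤ v T :=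
  hv.2.1 S T hS hT hST

lemma tendsto_iUnion (hv : IsSubmodular v) {S : ℕ → Set Ω} (hS : ∀ n, MeasurableSet (S n))
    (hmono : Monotone S) : Tendsto (fun n => v (S n)) atTop (𝓝 (v (⋃ n, S n))) :=
  hv.2.2.1 S hS hmono

lemma tendsto_iInter (hv : IsSubmodular v) {S : ℕ → Set Ω} (hS : ∀ n, MeasurableSet (S n))
    (hanti : Antitone S) : Tendsto (fun n => v (S n)) atTop (𝓝 (v (⋂ n, S n))) :=
  hv.2.2.2.1 S hS hanti

lemma union_add_inter_le (hv : IsSubmodular v) {S T : Set Ω} (hS : MeasurableSet S)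
    (hT : MeasurableSet T) : v (S ∪ T) + v (S ∩ T) ≤ v S + v T :=
  hv.2.2.2.2 S T hS hT

lemma nonneg (hv : IsSubmodular v) {S : Set Ω} (hS : MeasurableSet S) : 0 ≤ v S :=
  hv.empty ▸ hv.mono .empty hS (empty_subset S)

lemma comp_preimage_inter {β : Type*} [MeasurableSpace β] (hv : IsSubmodular v) {F : Ω → β}
    (hF : Measurable F) {A : Set Ω} (hA : MeasurableSet A) :
    IsSubmodular fun S : Set β => v (F ⁻¹' S ∩ A) := by
  have hmeas {S : Set β} (hS : MeasurableSet S) : MeasurableSet (F ⁻¹' S ∩ A) := (hF hS).inter hA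
  refine ⟨by simp [hv.empty], fun S T hS hT hST => hv.mono (hmeas hS) (hmeas hT) ?_,
    fun S hS hmono => ?_, fun S hS hanti => ?_, fun S T hS hT => ?_⟩
  · exact inter_subset_inter_left _ (preimage_mono hST)
  · simpa only [preimage_iUnion, iUnion_inter] using
      hv.tendsto_iUnion (fun n => hmeas (hS n))
        fun m n h => inter_subset_inter_left _ (preimage_mono (hmono h))
  · simpa only [preimage_iInter, iInter_inter] using
      hv.tendsto_iInter (fun n => hmeas (hS n))
        fun m n h => inter_subset_inter_left _ (preimage_mono (hanti h))
  · convert hv.union_add_inter_le (hmeas hS) (hmeas hT) using 3 <;> ext <;> simp <;> tauto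

lemma sum_sub_le_preimage (hv : IsSubmodular v) {c : Ω → ℤ} (hc : Measurable c)
    (T : Finset ℤ) :
    ∑ k ∈ T, (v (c ⁻¹' Iic k) - v (c ⁻¹' Iio k)) ≤ v (c ⁻¹' T) := by
  induction T using Finset.induction_on_max with
  | empty => simp [hv.empty]
  | insert a T hlt ih =>
    have hunion : c ⁻¹' Iio a ∪ c ⁻¹' ↑(insert a T) = c ⁻¹' Iic a := by
      rw [← preimage_union]; congr 1; ext k
      have := hlt k
      by_cases hk : k ∈ T <;> simp [hk, le_iff_lt_or_eq] <;> grind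
    have hinter : c ⁻¹' Iio a ∩ c ⁻¹' ↑(insert a T) = c ⁻¹' T := by
      rw [← preimage_inter]; congr 1; ext k
      have := hlt k
      by_cases hk : k ∈ T <;> simp [hk] <;> grind
    have := hv.union_add_inter_le (hc (measurableSet_Iio (a := a)))
      (hc (MeasurableSet.of_discrete (s := ↑(insert a T))))
    rw [hunion, hinter] at this
    rw [Finset.sum_insert fun ha => (hlt a ha).false]
    linarith

end IsSubmodular

lemma IsLowerSet.eq_empty_or_eq_univ_or_exists {α : Type*} [ConditionallyCompleteLinearOrder α]
    {L : Set α} (hL : IsLowerSet L) : L = ∅ ∨ L = univ ∨ ∃ a, L = Iic a ∨ L = Iio a := by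
  rcases L.eq_empty_or_nonempty with h | hne
  · exact Or.inl h
  by_cases hbdd : BddAbove L
  · have hunion : ⋃ x ∈ L, Iic x = L :=
      Subset.antisymm (iUnion₂_subset fun x hx y hy => hL hy hx)
        fun x hx => mem_biUnion hx (le_refl x)
    have hlub := isLUB_csSup hne hbdd
    by_cases hmem : sSup L ∈ L
    · exact Or.inr (Or.inr ⟨_, Or.inl (hunion ▸ hlub.biUnion_Iic_eq_Iic hmem)⟩)
    · exact Or.inr (Or.inr ⟨_, Or.inr (hunion ▸ hlub.biUnion_Iic_eq_Iio hmem)⟩)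
  · refine Or.inr (Or.inl (eq_univ_of_forall fun x => ?_))
    obtain ⟨y, hy, hxy⟩ := not_bddAbove_iff.1 hbdd x
    exact hL hxy.le hy

lemma Int.floor_mul_two_pow_eq_of_succ {x y : ℝ} {n : ℕ}
    (h : ⌊x * 2 ^ (n + 1)⌋ = ⌊y * 2 ^ (n + 1)⌋) : ⌊x * 2 ^ n⌋ = ⌊y * 2 ^ n⌋ := by
  have halve (z : ℝ) : ⌊z * 2 ^ n⌋ = ⌊z * 2 ^ (n + 1)⌋ / 2 := by
    simpa [pow_succ, mul_assoc] using
      (Int.mul_cast_floor_div_cancel_of_pos two_pos (z * 2 ^ n)).symm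
  rw [halve, halve y, h]

lemma Int.abs_sub_lt_of_floor_mul_two_pow_eq {x y : ℝ} {n : ℕ}
    (h : ⌊x * 2 ^ n⌋ = ⌊y * 2 ^ n⌋) : |x - y| < (1 / 2) ^ n := by
  have := Int.abs_sub_lt_one_of_floor_eq_floor h
  rw [← sub_mul, abs_mul, abs_of_pos (by positivity : (0 : ℝ) < 2 ^ n)] at this
  rwa [one_div_pow, lt_div_iff₀ (by positivity)]

namespace IsSubmodular

variable {w : Set ℝ → ℝ}

lemma monotone_Iic (hw : IsSubmodular w) : Monotone fun x => w (Iic x) :=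
  fun _ _ h => hw.mono measurableSet_Iic measurableSet_Iic (Iic_subset_Iic.2 h)

lemma rightLim_Iic (hw : IsSubmodular w) (x : ℝ) :
    Function.rightLim (fun y => w (Iic y)) x = w (Iic x) := by
  set u : ℕ → ℝ := fun n => x + 1 / (n + 1)
  have hu : Tendsto u atTop (𝓝 x) := by
    simpa [u] using (tendsto_const_nhds (x := x)).add tendsto_one_div_add_atTop_nhds_zero_nat
  have hu' : Tendsto u atTop (𝓝[>] x) :=
    tendsto_nhdsWithin_iff.2 ⟨hu, Eventually.of_forall fun n => by simp [u]; positivity⟩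
  have hanti : Antitone fun n => Iic (u n) := fun m n h =>
    Iic_subset_Iic.2 (by simp only [u]; gcongr)
  have hinter : ⋂ n, Iic (u n) = Iic x := Subset.antisymm
    (fun y hy => ge_of_tendsto' hu fun n => mem_iInter.1 hy n)
    (subset_iInter fun n => Iic_subset_Iic.2 (by simp [u]; positivity))
  have hlim := hw.tendsto_iInter (fun _ => measurableSet_Iic) hanti
  rw [hinter] at hlim
  exact tendsto_nhds_unique ((hw.monotone_Iic.tendsto_rightLim x).comp hu') hlim

lemma leftLim_Iic (hw : IsSubmodular w) (x : ℝ) :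
    Function.leftLim (fun y => w (Iic y)) x = w (Iio x) := by
  set u : ℕ → ℝ := fun n => x - 1 / (n + 1)
  have hu : Tendsto u atTop (𝓝 x) := by
    simpa [u] using (tendsto_const_nhds (x := x)).sub tendsto_one_div_add_atTop_nhds_zero_nat
  have hu' : Tendsto u atTop (𝓝[<] x) :=
    tendsto_nhdsWithin_iff.2 ⟨hu, Eventually.of_forall fun n => by simp [u]; positivity⟩
  have hmono : Monotone fun n => Iic (u n) := fun m n h =>
    Iic_subset_Iic.2 (by simp only [u]; gcongr)
  have hunion : ⋃ n, Iic (u n) = Iio x :=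
    iUnion_Iic_eq_Iio_of_lt_of_tendsto (fun n => by simp [u]; positivity) hu
  have hlim := hw.tendsto_iUnion (fun _ => measurableSet_Iic) hmono
  rw [hunion] at hlim
  exact tendsto_nhds_unique ((hw.monotone_Iic.tendsto_leftLim x).comp hu') hlim

lemma tendsto_Iic_atBot (hw : IsSubmodular w) : Tendsto (fun x => w (Iic x)) atBot (𝓝 0) := by
  have hinter : ⋂ n : ℕ, Iic (-(n : ℝ)) = ∅ := eq_empty_of_forall_notMem fun x hx => by
    obtain ⟨n, hn⟩ := exists_nat_gt (-x)
    have : x ≤ -n := mem_iInter.1 hx n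
    linarith
  have hseq := hw.tendsto_iInter (fun n => measurableSet_Iic)
    fun m n h => Iic_subset_Iic.2 (neg_le_neg (Nat.cast_le.2 h))
  rw [hinter, hw.empty] at hseq
  refine tendsto_atBot_isGLB hw.monotone_Iic
    ⟨?_, fun b hb => ge_of_tendsto' hseq fun n => hb ⟨_, rfl⟩⟩
  rintro _ ⟨x, rfl⟩
  exact hw.nonneg measurableSet_Iic

lemma tendsto_Iic_atTop (hw : IsSubmodular w) :
    Tendsto (fun x => w (Iic x)) atTop (𝓝 (w univ)) := by
  have hunion : ⋃ n : ℕ, Iic (n : ℝ) = univ :=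
    eq_univ_of_forall fun x => mem_iUnion.2 ⟨⌈x⌉₊, Nat.le_ceil x⟩
  have hseq := hw.tendsto_iUnion (fun n => measurableSet_Iic)
    fun m n h => Iic_subset_Iic.2 (Nat.cast_le.2 h)
  rw [hunion] at hseq
  refine tendsto_atTop_isLUB hw.monotone_Iic
    ⟨?_, fun b hb => le_of_tendsto' hseq fun n => hb ⟨_, rfl⟩⟩
  rintro _ ⟨x, rfl⟩
  exact hw.mono measurableSet_Iic .univ (subset_univ _)

noncomputable def stieltjesFunction (hw : IsSubmodular w) : StieltjesFunction ℝ where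
  toFun x := w (Iic x)
  mono' := hw.monotone_Iic
  right_continuous' x := by
    rw [← continuousWithinAt_Ioi_iff_Ici, hw.monotone_Iic.continuousWithinAt_Ioi_iff_rightLim_eq,
      hw.rightLim_Iic]

noncomputable def measure (hw : IsSubmodular w) : Measure ℝ := hw.stieltjesFunction.measure

instance isFiniteMeasure_measure (hw : IsSubmodular w) : IsFiniteMeasure hw.measure :=
  hw.stieltjesFunction.isFiniteMeasure hw.tendsto_Iic_atBot hw.tendsto_Iic_atTop

lemma measure_of_isLowerSet (hw : IsSubmodular w) {L : Set ℝ} (hL : IsLowerSet L) :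
    hw.measure L = ENNReal.ofReal (w L) := by
  rcases hL.eq_empty_or_eq_univ_or_exists with rfl | rfl | ⟨a, rfl | rfl⟩
  · simp [hw.empty]
  · rw [measure, hw.stieltjesFunction.measure_univ hw.tendsto_Iic_atBot hw.tendsto_Iic_atTop,
      sub_zero]
  · rw [measure, hw.stieltjesFunction.measure_Iic hw.tendsto_Iic_atBot a, sub_zero]
    rfl
  · rw [measure, hw.stieltjesFunction.measure_Iio hw.tendsto_Iic_atBot a, sub_zero,
      ← hw.leftLim_Iic]
    rfl

lemma measure_preimage_le (hw : IsSubmodular w) {c : ℝ → ℤ} (hc : Monotone c)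
    (hcm : Measurable c) (T : Finset ℤ) : hw.measure (c ⁻¹' T) ≤ ENNReal.ofReal (w (c ⁻¹' T)) := by
  have hfiber (k : ℤ) :
      hw.measure (c ⁻¹' {k}) = ENNReal.ofReal (w (c ⁻¹' Iic k) - w (c ⁻¹' Iio k)) := by
    rw [← Iic_sdiff_Iio_same, preimage_sdiff,
      measure_sdiff (preimage_mono Iio_subset_Iic_self) (hcm measurableSet_Iio).nullMeasurableSet
        (measure_ne_top _ _),
      hw.measure_of_isLowerSet (isLowerSet_Iic k |>.preimage hc),
      hw.measure_of_isLowerSet (isLowerSet_Iio k |>.preimage hc),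
      ENNReal.ofReal_sub _ (hw.nonneg (hcm measurableSet_Iio))]
  rw [← sum_measure_preimage_singleton T fun k _ => hcm (measurableSet_singleton k)]
  simp_rw [hfiber]
  rw [← ENNReal.ofReal_sum_of_nonneg fun k _ => sub_nonneg.2 <|
    hw.mono (hcm measurableSet_Iio) (hcm measurableSet_Iic) (preimage_mono Iio_subset_Iic_self)]
  exact ENNReal.ofReal_le_ofReal (hw.sum_sub_le_preimage hcm T)

/-- A compact set is the decreasing intersection of the unions of the dyadic intervals of
length `2⁻ⁿ` that meet it, and `measure_preimage_le` applies to each of these unions. -/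
lemma measure_le_of_isCompact (hw : IsSubmodular w) {K : Set ℝ} (hK : IsCompact K) :
    hw.measure K ≤ ENNReal.ofReal (w K) := by
  set c : ℕ → ℝ → ℤ := fun n x => ⌊x * 2 ^ n⌋
  set D : ℕ → Set ℝ := fun n => c n ⁻¹' (c n '' K)
  have hc (n : ℕ) : Monotone (c n) :=
    Int.floor_mono.comp (monotone_mul_right_of_nonneg (by positivity))
  have hcm (n : ℕ) : Measurable (c n) := (measurable_id.mul_const _).floor
  have hfin (n : ℕ) : (c n '' K).Finite := by
    obtain ⟨a, ha⟩ := hK.bddBelow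
    obtain ⟨b, hb⟩ := hK.bddAbove
    exact (finite_Icc (c n a) (c n b)).subset <| image_subset_iff.2 fun x hx =>
      ⟨hc n (ha hx), hc n (hb hx)⟩
  have hanti : Antitone D := antitone_nat_of_succ_le fun n x ⟨y, hy, hxy⟩ =>
    ⟨y, hy, Int.floor_mul_two_pow_eq_of_succ hxy⟩
  have hinter : ⋂ n, D n = K := by
    refine Subset.antisymm (fun x hx => ?_) (subset_iInter fun n => subset_preimage_image _ _)
    rw [← hK.isClosed.closure_eq, Metric.mem_closure_iff]
    intro ε hε
    obtain ⟨n, hn⟩ := exists_pow_lt_of_lt_one hε (by norm_num : (1 / 2 : ℝ) < 1)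
    obtain ⟨y, hy, hxy⟩ := mem_iInter.1 hx n
    exact ⟨y, hy, (Real.dist_eq x y ▸ Int.abs_sub_lt_of_floor_mul_two_pow_eq hxy.symm).trans hn⟩
  have hle (n : ℕ) : hw.measure K ≤ ENNReal.ofReal (w (D n)) := by
    have := hw.measure_preimage_le (hc n) (hcm n) (hfin n).toFinset
    rw [Finite.coe_toFinset] at this
    exact (measure_mono (subset_preimage_image _ _)).trans this
  have hlim := hw.tendsto_iInter (fun n => hcm n (hfin n).measurableSet) hanti
  rw [hinter] at hlim
  exact ge_of_tendsto' (ENNReal.tendsto_ofReal hlim) hle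

lemma measure_le (hw : IsSubmodular w) {S : Set ℝ} (hS : MeasurableSet S) :
    hw.measure S ≤ ENNReal.ofReal (w S) := by
  rw [hS.measure_eq_iSup_isCompact]
  exact iSup₂_le fun K hKS => iSup_le fun hK => (hw.measure_le_of_isCompact hK).trans <|
    ENNReal.ofReal_le_ofReal (hw.mono hK.measurableSet hS hKS)

end IsSubmodular

lemma MeasureTheory.exists_measure_comap_eq {α β : Type*} [mβ : MeasurableSpace β] (f : α → β)
    (μ : Measure β) (hμ : ∀ S, MeasurableSet S → f ⁻¹' S = ∅ → μ S = 0) :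
    ∃ ν : @Measure α (mβ.comap f), ∀ S, MeasurableSet S → ν (f ⁻¹' S) = μ S := by
  have hcongr {S S' : Set β} (hS : MeasurableSet S) (hS' : MeasurableSet S')
      (h : f ⁻¹' S = f ⁻¹' S') : μ S = μ S' :=
    measure_congr <| ae_eq_set.2
      ⟨hμ _ (hS.diff hS') (by rw [preimage_sdiff, h, sdiff_self]),
        hμ _ (hS'.diff hS) (by rw [preimage_sdiff, h, sdiff_self])⟩
  let _ : MeasurableSpace α := mβ.comap f
  choose S hS hfS using fun (E : Set α) (hE : MeasurableSet E) => hE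
  refine ⟨Measure.ofMeasurable (fun E hE => μ (S E hE)) ?_ ?_, fun T hT => ?_⟩
  · exact (hcongr (hS _ _) .empty (by rw [hfS, preimage_empty])).trans measure_empty
  · intro E hE hdisj
    rw [hcongr (hS _ _) (.iUnion fun i => hS _ (hE i)) (by simp only [preimage_iUnion, hfS])]
    refine measure_iUnion₀ (fun i j hij => hμ _ ((hS _ _).inter (hS _ _)) ?_)
      fun i => (hS _ _).nullMeasurableSet
    rw [Set.preimage_inter, hfS, hfS]
    exact (hdisj hij).inter_eq
  · rw [Measure.ofMeasurable_apply _ (show MeasurableSet (f ⁻¹' T) from ⟨T, hT, rfl⟩)]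
    exact hcongr (hS _ _) hT (hfS _ _)

lemma IsChain.isPiSystem {α : Type*} {C : Set (Set α)} (hC : IsChain (· ⊆ ·) C) : IsPiSystem C :=
  fun s hs t ht _ => (hC.total hs ht).elim (fun h => by rwa [inter_eq_left.2 h])
    fun h => by rwa [inter_eq_right.2 h]

/-- Weighting the complements of the sets of the chain by `2⁻ⁿ`, a point lies deeper in the chain
the smaller its weight. -/
lemma exists_measurable_preimage_isLowerSet {Ω : Type*} [MeasurableSpace Ω] {T : Set (Set Ω)}
    (hTc : T.Countable) (hT : IsChain (· ⊆ ·) T) (hTm : ∀ S ∈ T, MeasurableSet S) :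
    ∃ F : Ω → ℝ, Measurable F ∧ ∀ S ∈ T, ∃ L : Set ℝ, IsLowerSet L ∧ F ⁻¹' L = S := by
  rcases T.eq_empty_or_nonempty with rfl | hne
  · exact ⟨0, measurable_const, fun S hS => hS.elim⟩
  obtain ⟨e, rfl⟩ := hTc.exists_eq_range hne
  set g : ℕ → Ω → ℝ := fun n => (e n)ᶜ.indicator fun _ => (1 / 2 : ℝ) ^ n
  have hg0 (n : ℕ) (ω : Ω) : 0 ≤ g n ω := indicator_nonneg (fun _ _ => by positivity) ω
  have hg (ω : Ω) : Summable fun n => g n ω :=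
    .of_nonneg_of_le (hg0 · ω) (fun n => indicator_le_self' (fun _ _ => by positivity) ω)
      summable_geometric_two
  refine ⟨fun ω => ∑' n, g n ω,
    Measurable.tsum fun n => measurable_const.indicator (hTm _ ⟨n, rfl⟩).compl, ?_⟩
  rintro _ ⟨k, rfl⟩
  refine ⟨lowerClosure ((fun ω => ∑' n, g n ω) '' e k), (lowerClosure _).lower, ?_⟩
  refine Subset.antisymm (fun ω' ⟨_, ⟨ω, hω, rfl⟩, hle⟩ => ?_) fun ω hω => ⟨_, ⟨ω, hω, rfl⟩, le_rfl⟩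
  by_contra hω'
  have hsub (n : ℕ) (hn : ω' ∈ e n) : ω ∈ e n :=
    (hT.total ⟨n, rfl⟩ ⟨k, rfl⟩).elim (fun h => absurd (h hn) hω') fun h => h hω
  refine (Summable.tsum_lt_tsum_of_nonneg (hg0 · ω) (fun n => ?_) (i := k) ?_ (hg ω')).not_ge hle
  · by_cases hn : ω' ∈ e n
    · simp [g, hn, hsub n hn]
    · by_cases hn' : ω ∈ e n <;> simp [g, hn, hn']
  · simp [g, hω, hω']

section Core

variable {Ω : Type*} {v : Set Ω → ℝ} {A : Set Ω}

/-- `ν` lies in the core of the game `E ↦ v (E ∩ A)` on `σ(T)` and is tight on `T`. -/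
structure IsCoreMeasure (v : Set Ω → ℝ) (A : Set Ω) (T : Set (Set Ω))
    (ν : @Measure Ω (generateFrom T)) : Prop where
  measure_univ : ν univ = ENNReal.ofReal (v A)
  measure_of_mem : ∀ S ∈ T, ν S = ENNReal.ofReal (v (S ∩ A))
  measure_le : ∀ E, MeasurableSet[generateFrom T] E → ν E ≤ ENNReal.ofReal (v (E ∩ A))

lemma IsSubmodular.exists_isCoreMeasure [MeasurableSpace Ω] (hv : IsSubmodular v)
    (hA : MeasurableSet A) {T : Set (Set Ω)} (hTc : T.Countable) (hT : IsChain (· ⊆ ·) T)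
    (hTm : ∀ S ∈ T, MeasurableSet S) : ∃ ν, IsCoreMeasure v A T ν := by
  obtain ⟨F, hF, hFT⟩ := exists_measurable_preimage_isLowerSet hTc hT hTm
  have hw := hv.comp_preimage_inter hF hA
  obtain ⟨ν, hν⟩ := exists_measure_comap_eq F hw.measure fun S hS h => by
    simpa [h, hv.empty] using hw.measure_le hS
  have hle : generateFrom T ≤ MeasurableSpace.comap F inferInstance :=
    generateFrom_le fun S hS => by
      obtain ⟨L, hL, rfl⟩ := hFT S hS
      exact ⟨L, hL.ordConnected.measurableSet, rfl⟩
  refine ⟨ν.trim hle, ⟨?_, fun S hS => ?_, fun E hE => ?_⟩⟩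
  · rw [trim_measurableSet_eq hle .univ, ← preimage_univ, hν _ .univ,
      hw.measure_of_isLowerSet isLowerSet_univ, preimage_univ, univ_inter]
  · obtain ⟨L, hL, rfl⟩ := hFT S hS
    rw [trim_measurableSet_eq hle (measurableSet_generateFrom hS),
      hν _ hL.ordConnected.measurableSet, hw.measure_of_isLowerSet hL]
  · obtain ⟨S, hS, rfl⟩ := hle E hE
    rw [trim_measurableSet_eq hle hE, hν _ hS]
    exact hw.measure_le hS

lemma IsCoreMeasure.apply_eq_of_subset {T T' : Set (Set Ω)} (hT : IsChain (· ⊆ ·) T)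
    (hTT' : T ⊆ T') {ν ν'} (hν : IsCoreMeasure v A T ν) (hν' : IsCoreMeasure v A T' ν')
    {E : Set Ω} (hE : MeasurableSet[generateFrom T] E) : ν' E = ν E := by
  have hle : generateFrom T ≤ generateFrom T' := generateFrom_mono hTT'
  have : IsFiniteMeasure (ν'.trim hle) :=
    ⟨by simp [trim_measurableSet_eq hle .univ, hν'.measure_univ]⟩
  have htrim : ν'.trim hle = ν := ext_of_generate_finite T rfl hT.isPiSystem
    (fun S hS => by
      rw [trim_measurableSet_eq hle (measurableSet_generateFrom hS), hν'.measure_of_mem S (hTT' hS),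
        hν.measure_of_mem S hS])
    (by rw [trim_measurableSet_eq hle .univ, hν'.measure_univ, hν.measure_univ])
  rw [← htrim, trim_measurableSet_eq hle hE]

end Core

lemma MeasurableSpace.exists_countable_subset_measurableSet_generateFrom {Ω : Type*}
    {C : Set (Set Ω)} {E : Set Ω} (hE : MeasurableSet[generateFrom C] E) :
    ∃ T ⊆ C, T.Countable ∧ MeasurableSet[generateFrom T] E := by
  induction E, hE using generateFrom_induction with
  | hC t ht => exact ⟨{t}, singleton_subset_iff.2 ht, countable_singleton t,
      measurableSet_generateFrom rfl⟩
  | empty => exact ⟨∅, empty_subset _, countable_empty, (generateFrom ∅).measurableSet_empty⟩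
  | compl t _ ih =>
    obtain ⟨T, hTC, hTc, ht⟩ := ih
    exact ⟨T, hTC, hTc, ht.compl⟩
  | iUnion s _ ih =>
    choose T hTC hTc hs using ih
    exact ⟨⋃ n, T n, iUnion_subset hTC, countable_iUnion hTc,
      .iUnion fun n => generateFrom_mono (subset_iUnion T n) _ (hs n)⟩

/-- Every set of `σ(C)` lies in `σ(T)` for a countable `T ⊆ C`, and countably many such `T` lie in
a common one. -/
lemma MeasurableSpace.exists_measure_generateFrom_of_countable {Ω : Type*} {C : Set (Set Ω)}
    (P : ∀ T : Set (Set Ω), @Measure Ω (generateFrom T) → Prop)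
    (hex : ∀ T ⊆ C, T.Countable → ∃ ν, P T ν)
    (hcompat : ∀ T T', T ⊆ T' → T' ⊆ C → T'.Countable → ∀ ν ν', P T ν → P T' ν' →
      ∀ E, MeasurableSet[generateFrom T] E → ν' E = ν E) :
    ∃ μ : @Measure Ω (generateFrom C), ∀ T ⊆ C, T.Countable → ∀ ν, P T ν →
      ∀ E, MeasurableSet[generateFrom T] E → μ E = ν E := by
  let _ : MeasurableSpace Ω := generateFrom C
  choose T hTC hTc hET using fun (E : Set Ω) (hE : MeasurableSet E) =>
    exists_countable_subset_measurableSet_generateFrom hE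
  choose ν hν using fun E hE => hex (T E hE) (hTC E hE) (hTc E hE)
  have hagree (T₁ : Set (Set Ω)) (hT₁C : T₁ ⊆ C) (hT₁c : T₁.Countable) (ν₁) (hν₁ : P T₁ ν₁)
      (E : Set Ω) (hE : MeasurableSet E) (hE₁ : MeasurableSet[generateFrom T₁] E) :
      ν E hE E = ν₁ E := by
    obtain ⟨ν₂, hν₂⟩ := hex (T E hE ∪ T₁) (union_subset (hTC E hE) hT₁C) ((hTc E hE).union hT₁c)
    rw [← hcompat _ _ subset_union_left (union_subset (hTC E hE) hT₁C) ((hTc E hE).union hT₁c)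
        _ _ (hν E hE) hν₂ E (hET E hE),
      hcompat _ _ subset_union_right (union_subset (hTC E hE) hT₁C) ((hTc E hE).union hT₁c)
        _ _ hν₁ hν₂ E hE₁]
  refine ⟨Measure.ofMeasurable (fun E hE => ν E hE E) (measure_empty ..) ?_,
    fun T₁ hT₁C hT₁c ν₁ hν₁ E hE₁ => ?_⟩
  · intro f hf hdisj
    set T' := T _ (.iUnion hf) ∪ ⋃ i, T (f i) (hf i)
    have hT'C : T' ⊆ C := union_subset (hTC _ _) (iUnion_subset fun i => hTC _ _)
    have hT'c : T'.Countable := (hTc _ _).union (countable_iUnion fun i => hTc _ _)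
    have hfT' (i : ℕ) : MeasurableSet[generateFrom T'] (f i) :=
      generateFrom_mono ((subset_iUnion (fun i => T (f i) (hf i)) i).trans subset_union_right) _
        (hET _ _)
    obtain ⟨ν', hν'⟩ := hex T' hT'C hT'c
    rw [hagree T' hT'C hT'c ν' hν' _ _ (.iUnion hfT'), measure_iUnion hdisj hfT']
    exact tsum_congr fun i => (hagree T' hT'C hT'c ν' hν' _ _ (hfT' i)).symm
  · have hE : MeasurableSet E := generateFrom_mono hT₁C _ hE₁
    rw [Measure.ofMeasurable_apply E hE]
    exact hagree T₁ hT₁C hT₁c ν₁ hν₁ E hE hE₁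

lemma MeasurableSpace.measurableSet_inter_of_generateFrom {Ω : Type*} {m : MeasurableSpace Ω}
    {I : Set (Set Ω)} {A : Set Ω} (hA : MeasurableSet[m] A)
    (hI : ∀ J ∈ I, MeasurableSet[m] (J ∩ A)) {E : Set Ω} (hE : MeasurableSet[generateFrom I] E) :
    MeasurableSet[m] (E ∩ A) := by
  induction E, hE using generateFrom_induction with
  | hC J hJ => exact hI J hJ
  | empty => simp
  | compl t _ ht =>
    have : tᶜ ∩ A = A \ (t ∩ A) := by ext; simp [and_comm]
    exact this ▸ hA.diff ht
  | iUnion s _ ih =>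
    rw [iUnion_inter]
    exact .iUnion ih

section Chain

variable {Ω : Type*} [MeasurableSpace Ω] {A : Set Ω} {C : Set (Set Ω)}

theorem IsSubmodular.exists_measure_of_isChain {v : Set Ω → ℝ} (hv : IsSubmodular v)
    (hA : MeasurableSet A) (hC : IsChain (· ⊆ ·) C) (hCm : ∀ S ∈ C, MeasurableSet S)
    (hCA : ∀ S ∈ C, S ⊆ A) (htrace : ∀ E, MeasurableSet E → MeasurableSet[generateFrom C] (E ∩ A)) :
    ∃ μ : Measure Ω, μ.restrict A = μ ∧ IsFiniteMeasure μ ∧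
      (∀ S ∈ C, μ S = ENNReal.ofReal (v S)) ∧
      ∀ E, MeasurableSet E → μ E ≤ ENNReal.ofReal (v (E ∩ A)) := by
  have hex (T : Set (Set Ω)) (hTC : T ⊆ C) (hTc : T.Countable) : ∃ ν, IsCoreMeasure v A T ν :=
    hv.exists_isCoreMeasure hA hTc (hC.mono hTC) fun S hS => hCm S (hTC hS)
  obtain ⟨μC, hμC⟩ := exists_measure_generateFrom_of_countable (IsCoreMeasure v A) hex
    fun T T' hTT' hT'C _ _ _ hν hν' _ hE =>
      hν.apply_eq_of_subset ((hC.mono hT'C).mono hTT') hTT' hν' hE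
  have hμC_le (E : Set Ω) (hE : MeasurableSet[generateFrom C] E) :
      μC E ≤ ENNReal.ofReal (v (E ∩ A)) := by
    obtain ⟨T, hTC, hTc, hET⟩ := exists_countable_subset_measurableSet_generateFrom hE
    obtain ⟨ν, hν⟩ := hex T hTC hTc
    exact hμC T hTC hTc ν hν E hET ▸ hν.measure_le E hET
  let μ : Measure Ω := Measure.ofMeasurable (fun E _ => μC (E ∩ A)) (by simp) fun f hf hdisj => by
    rw [iUnion_inter]
    exact measure_iUnion (fun i j hij => (hdisj hij).mono inter_subset_left inter_subset_left)
      fun i => htrace _ (hf i)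
  have hμ (E : Set Ω) (hE : MeasurableSet E) : μ E = μC (E ∩ A) := Measure.ofMeasurable_apply E hE
  have hμ_le (E : Set Ω) (hE : MeasurableSet E) : μ E ≤ ENNReal.ofReal (v (E ∩ A)) := by
    simpa [hμ E hE, inter_assoc] using hμC_le _ (htrace E hE)
  refine ⟨μ, ?_, ⟨(hμ_le univ .univ).trans_lt ENNReal.ofReal_lt_top⟩, fun S hS => ?_, hμ_le⟩
  · ext E hE
    rw [Measure.restrict_apply hE, hμ _ (hE.inter hA), hμ E hE, inter_assoc, inter_self]
  · obtain ⟨ν, hν⟩ := hex {S} (singleton_subset_iff.2 hS) (countable_singleton S)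
    have hSA := inter_eq_left.2 (hCA S hS)
    rw [hμ S (hCm S hS), hSA, hμC {S} (singleton_subset_iff.2 hS) (countable_singleton S) ν hν S
      (measurableSet_generateFrom rfl), hν.measure_of_mem S rfl, hSA]

theorem MeasureTheory.Measure.ext_of_isChain_of_restrict_eq {μ ν : Measure Ω} [IsFiniteMeasure μ]
    (hC : IsChain (· ⊆ ·) C) (hCm : ∀ S ∈ C, MeasurableSet S) (hAC : A ∈ C)
    (htrace : ∀ E, MeasurableSet E → MeasurableSet[generateFrom C] (E ∩ A))
    (hμ : μ.restrict A = μ) (hν : ν.restrict A = ν) (h : ∀ S ∈ C, μ S = ν S) : μ = ν := by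
  ext E hE
  rw [← hμ, ← hν, Measure.restrict_apply hE, Measure.restrict_apply hE]
  refine ext_on_measurableSpace_of_generate_finite _ C h (generateFrom_le hCm) rfl hC.isPiSystem ?_
    (htrace E hE)
  rw [← hμ, ← hν, Measure.restrict_apply_univ, Measure.restrict_apply_univ, h A hAC]

end Chain

section TraceChain

variable {Ω : Type*} {I : Set (Set Ω)} {A B : Set Ω}

/-- The family `𝓘_{A,B}`. -/
def traceChain (I : Set (Set Ω)) (A B : Set Ω) : Set (Set Ω) :=
  {S | ∃ J ∈ I, S = B ∩ (J ∩ A)} ∪ {S | ∃ J ∈ I, S = B ∪ J ∩ A}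

lemma isChain_traceChain (hI : IsChain (· ⊆ ·) I) : IsChain (· ⊆ ·) (traceChain I A B) := by
  rintro _ (⟨J₁, hJ₁, rfl⟩ | ⟨J₁, hJ₁, rfl⟩) _ (⟨J₂, hJ₂, rfl⟩ | ⟨J₂, hJ₂, rfl⟩) -
  · exact (hI.total hJ₁ hJ₂).imp (fun h => by gcongr) fun h => by gcongr
  · exact Or.inl (inter_subset_left.trans subset_union_left)
  · exact Or.inr (inter_subset_left.trans subset_union_left)
  · exact (hI.total hJ₁ hJ₂).imp (fun h => by gcongr) fun h => by gcongr

lemma measurableSet_of_mem_traceChain [MeasurableSpace Ω] (hI : ∀ J ∈ I, MeasurableSet J)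
    (hA : MeasurableSet A) (hB : MeasurableSet B) : ∀ S ∈ traceChain I A B, MeasurableSet S := by
  rintro _ (⟨J, hJ, rfl⟩ | ⟨J, hJ, rfl⟩)
  · exact hB.inter ((hI J hJ).inter hA)
  · exact hB.union ((hI J hJ).inter hA)

lemma subset_of_mem_traceChain (hBA : B ⊆ A) : ∀ S ∈ traceChain I A B, S ⊆ A := by
  rintro _ (⟨J, -, rfl⟩ | ⟨J, -, rfl⟩)
  · exact inter_subset_left.trans hBA
  · exact union_subset hBA inter_subset_right

lemma mem_traceChain_outer (hU : univ ∈ I) (hBA : B ⊆ A) : A ∈ traceChain I A B :=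
  Or.inr ⟨univ, hU, by rw [univ_inter, union_eq_self_of_subset_left hBA]⟩

lemma mem_traceChain_inner (hU : univ ∈ I) (hBA : B ⊆ A) : B ∈ traceChain I A B :=
  Or.inl ⟨univ, hU, by rw [univ_inter, inter_eq_self_of_subset_left hBA]⟩

lemma measurableSet_inter_traceChain (hU : univ ∈ I) (hBA : B ⊆ A) {E : Set Ω}
    (hE : MeasurableSet[generateFrom I] E) :
    MeasurableSet[generateFrom (traceChain I A B)] (E ∩ A) := by
  have hmem {S : Set Ω} (hS : S ∈ traceChain I A B) :
      MeasurableSet[generateFrom (traceChain I A B)] S := measurableSet_generateFrom hS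
  refine measurableSet_inter_of_generateFrom (hmem (mem_traceChain_outer hU hBA))
    (fun J hJ => ?_) hE
  have : J ∩ A = B ∩ (J ∩ A) ∪ (B ∪ J ∩ A) \ B := by ext; simp; tauto
  rw [this]
  exact (hmem (Or.inl ⟨J, hJ, rfl⟩)).union ((hmem (Or.inr ⟨J, hJ, rfl⟩)).diff
    (hmem (mem_traceChain_inner hU hBA)))

end TraceChain

theorem main_existence_uniqueness_general {Ω : Type*} [m : MeasurableSpace Ω]
    (I : Set (Set Ω)) (hU : Set.univ ∈ I)
    (hchain : ∀ I₁ ∈ I, ∀ I₂ ∈ I, I₁ ⊆ I₂ ∨ I₂ ⊆ I₁)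
    (hgen : MeasurableSpace.generateFrom I = m)
    (v : Set Ω → ℝ) (hv : IsSubmodular v)
    (A B : Set Ω) (hA : MeasurableSet A) (hB : MeasurableSet B) (hBA : B ⊆ A) :
    ∃ μ : Measure Ω, μ.restrict A = μ ∧ IsFiniteMeasure μ ∧
      (∀ S ∈ ({S | ∃ J ∈ I, S = B ∩ (J ∩ A)} ∪ {S | ∃ J ∈ I, S = B ∪ J ∩ A} : Set (Set Ω)),
        (μ S).toReal = v S) ∧
      (μ A).toReal = v A ∧ (μ B).toReal = v B ∧
      (∀ E : Set Ω, MeasurableSet E → E ⊆ A → (μ E).toReal ≤ v E) ∧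
      (∀ μ' : Measure Ω, μ'.restrict A = μ' → IsFiniteMeasure μ' →
        (∀ S ∈ ({S | ∃ J ∈ I, S = B ∩ (J ∩ A)} ∪ {S | ∃ J ∈ I, S = B ∪ J ∩ A} : Set (Set Ω)),
          (μ' S).toReal = v S) → μ' = μ) := by
  have hC : IsChain (· ⊆ ·) (traceChain I A B) :=
    isChain_traceChain fun J₁ hJ₁ J₂ hJ₂ _ => hchain J₁ hJ₁ J₂ hJ₂
  have hCm :=
    measurableSet_of_mem_traceChain (fun J hJ => hgen ▸ measurableSet_generateFrom hJ) hA hB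
  have htrace (E : Set Ω) (hE : MeasurableSet E) :
      MeasurableSet[generateFrom (traceChain I A B)] (E ∩ A) :=
    measurableSet_inter_traceChain hU hBA (hgen.symm ▸ hE)
  obtain ⟨μ, hμA, hμfin, hμC, hμle⟩ :=
    hv.exists_measure_of_isChain hA hC hCm (subset_of_mem_traceChain hBA) htrace
  have hval (S : Set Ω) (hS : S ∈ traceChain I A B) : (μ S).toReal = v S := by
    rw [hμC S hS, ENNReal.toReal_ofReal (hv.nonneg (hCm S hS))]
  refine ⟨μ, hμA, hμfin, hval, hval A (mem_traceChain_outer hU hBA),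
    hval B (mem_traceChain_inner hU hBA), fun E hE hEA => ?_, fun μ' hμ'A _ hμ' => ?_⟩
  · refine ENNReal.toReal_le_of_le_ofReal (hv.nonneg hE) ?_
    simpa [inter_eq_left.2 hEA] using hμle E hE
  · refine Measure.ext_of_isChain_of_restrict_eq hC hCm (mem_traceChain_outer hU hBA) htrace
      hμ'A hμA fun S hS => ?_
    rw [← ENNReal.toReal_eq_toReal_iff' (measure_ne_top _ _) (measure_ne_top _ _), hμ' S hS,
      hval S hS]

theorem main_existence_uniqueness {Ω : Type*} [m : MeasurableSpace Ω]
    (I : Set (Set Ω)) (h0 : ∅ ∈ I) (hU : Set.univ ∈ I)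
    (hchain : ∀ I₁ ∈ I, ∀ I₂ ∈ I, I₁ ⊆ I₂ ∨ I₂ ⊆ I₁)
    (hgen : MeasurableSpace.generateFrom I = m)
    (v : Set Ω → ℝ) (hv : IsSubmodular v)
    (A B : Set Ω) (hA : MeasurableSet A) (hB : MeasurableSet B) (hBA : B ⊆ A) :
    ∃ μ : Measure Ω, μ.restrict A = μ ∧ IsFiniteMeasure μ ∧
      (∀ S ∈ ({S | ∃ J ∈ I, S = B ∩ (J ∩ A)} ∪ {S | ∃ J ∈ I, S = B ∪ J ∩ A} : Set (Set Ω)),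
        (μ S).toReal = v S) ∧
      (μ A).toReal = v A ∧ (μ B).toReal = v B ∧
      (∀ E : Set Ω, MeasurableSet E → E ⊆ A → (μ E).toReal ≤ v E) ∧
      (∀ μ' : Measure Ω, μ'.restrict A = μ' → IsFiniteMeasure μ' →
        (∀ S ∈ ({S | ∃ J ∈ I, S = B ∩ (J ∩ A)} ∪ {S | ∃ J ∈ I, S = B ∪ J ∩ A} : Set (Set Ω)),
          (μ' S).toReal = v S) → μ' = μ) :=
  main_existence_uniqueness_general (m := m) I hU hchain hgen v hv A B hA hB hBA
end

section
/- Let (Ω,𝓕) be a measurable space admitting a totally ordered generating class 𝓘, and let v : 𝓕 → ℝ be supermodular (non-decreasing, continuous, v(∅)=0, v(A)+v(B) ≤ v(A∪B)+v(A∩B)). Then for all measurable B ⊆ A, v(B) = inf { μ(B) : μ finite measure on A, μ(A)=v(A), μ(E) ≥ v(E) for all measurable E ⊆ A }, and the infimum is attained. -/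
open MeasureTheory Set Filter Topology

/-!
On a chain `C`, `I \ J ↦ w I - w J` is a well-defined premeasure on differences of nested
members, and each member of `C` cuts such a difference into two of the same kind, so the members
of `C` are Carathéodory-measurable for the outer measure it generates; as `σ(C) = 𝓕` this yields a
measure `μ` with `μ Ω = w Ω`. When `w` is supermodular, monotone and continuous from below, `μ`
dominates `w`: a set covered by finitely many differences `I_k \ J_k` is bounded by peeling off
the one with the largest `I_k`, and continuity from below passes to countable covers.

For `B ⊆ A` this is applied to `E ↦ v (E ∩ B) + v (E ∩ A ∪ B) - v B`, which inherits these
properties from `v`, equals `v A` on `Ω` and `v A - v B` on `A \ B`, and dominates `v` on subsets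
of `A`. Restricting the resulting measure to `A` gives an element of `𝓒₊(A)` that is exact at
`B`, while every element of `𝓒₊(A)` is at least `v B` at `B`.
-/

open scoped ENNReal

section ChainPremeasure

variable {Ω : Type*} {C : Set (Set Ω)} {w : Set Ω → ℝ} {I J I' J' : Set Ω}

theorem IsChain.inter_mem (hC : IsChain (· ⊆ ·) C) (hI : I ∈ C) (hJ : J ∈ C) : I ∩ J ∈ C := by
  rcases hC.total hI hJ with h | h
  · rwa [inter_eq_left.2 h]
  · rwa [inter_eq_right.2 h]

theorem IsChain.union_mem (hC : IsChain (· ⊆ ·) C) (hI : I ∈ C) (hJ : J ∈ C) : I ∪ J ∈ C := by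
  rcases hC.total hI hJ with h | h
  · rwa [union_eq_right.2 h]
  · rwa [union_eq_left.2 h]

theorem IsChain.eq_and_eq_or_eq_and_eq_of_diff_eq_diff (hC : IsChain (· ⊆ ·) C)
    (hI : I ∈ C) (hJ : J ∈ C) (hI' : I' ∈ C) (hJ' : J' ∈ C) (hJI : J ⊆ I) (hJI' : J' ⊆ I')
    (h : I \ J = I' \ J') : (I = J ∧ I' = J') ∨ (I = I' ∧ J = J') := by
  wlog hII' : I ⊆ I' generalizing I J I' J'
  · exact (this hI' hJ' hI hJ hJI' hJI h.symm
      ((hC.total hI hI').resolve_left hII')).imp And.symm fun h => ⟨h.1.symm, h.2.symm⟩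
  rcases (I \ J).eq_empty_or_nonempty with hempty | ⟨x, hx⟩
  · exact Or.inl ⟨hJI.antisymm' (sdiff_eq_empty.1 hempty),
      hJI'.antisymm' (sdiff_eq_empty.1 (h ▸ hempty))⟩
  have hJ'I : J' ⊆ I := (hC.total hI hJ').resolve_left fun hIJ' => (h ▸ hx).2 (hIJ' hx.1)
  have hI'I : I' ⊆ I := fun y hy => by
    by_cases hyJ' : y ∈ J'
    · exact hJ'I hyJ'
    · exact (show y ∈ I \ J by rw [h]; exact ⟨hy, hyJ'⟩).1
  obtain rfl : I = I' := hII'.antisymm hI'I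
  exact Or.inr ⟨rfl, by rw [← sdiff_sdiff_cancel_left hJI, h, sdiff_sdiff_cancel_left hJI']⟩

/-- The premeasure `I \ J ↦ w I - w J` on differences of nested members of `C`, extended by `∞`. -/
noncomputable def chainPremeasure (C : Set (Set Ω)) (w : Set Ω → ℝ) (S : Set Ω) : ℝ≥0∞ :=
  ⨅ (p : Set Ω × Set Ω) (_ : p.1 ∈ C ∧ p.2 ∈ C ∧ p.2 ⊆ p.1 ∧ p.1 \ p.2 = S),
    ENNReal.ofReal (w p.1 - w p.2)

theorem chainPremeasure_diff_le (hI : I ∈ C) (hJ : J ∈ C) (hJI : J ⊆ I) :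
    chainPremeasure C w (I \ J) ≤ ENNReal.ofReal (w I - w J) :=
  iInf₂_le (I, J) ⟨hI, hJ, hJI, rfl⟩

theorem chainPremeasure_empty (hI : I ∈ C) : chainPremeasure C w ∅ = 0 := by
  simpa using chainPremeasure_diff_le (w := w) hI hI subset_rfl

theorem exists_diff_eq_of_chainPremeasure_ne_top {S : Set Ω} (h : chainPremeasure C w S ≠ ∞) :
    ∃ I ∈ C, ∃ J ∈ C, J ⊆ I ∧ I \ J = S := by
  contrapose! h
  exact iInf₂_eq_top.2 fun p hp => absurd hp.2.2.2 (h _ hp.1 _ hp.2.1 hp.2.2.1)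

theorem IsChain.chainPremeasure_diff (hC : IsChain (· ⊆ ·) C) (hI : I ∈ C) (hJ : J ∈ C)
    (hJI : J ⊆ I) : chainPremeasure C w (I \ J) = ENNReal.ofReal (w I - w J) := by
  refine (chainPremeasure_diff_le hI hJ hJI).antisymm (le_iInf₂ fun p ⟨hp₁, hp₂, hp₂₁, hp⟩ => ?_)
  rcases hC.eq_and_eq_or_eq_and_eq_of_diff_eq_diff hI hJ hp₁ hp₂ hJI hp₂₁ hp.symm with
    ⟨rfl, hp'⟩ | ⟨rfl, rfl⟩
  · simp [hp']
  · rfl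

theorem IsChain.chainPremeasure_inter_add_diff_le (hC : IsChain (· ⊆ ·) C) (hw : MonotoneOn w C)
    {I₀ : Set Ω} (hI₀ : I₀ ∈ C) (t : Set Ω) :
    chainPremeasure C w (t ∩ I₀) + chainPremeasure C w (t \ I₀) ≤ chainPremeasure C w t := by
  by_cases htop : chainPremeasure C w t = ∞
  · simp [htop]
  obtain ⟨I, hI, J, hJ, hJI, rfl⟩ := exists_diff_eq_of_chainPremeasure_ne_top htop
  -- `t` splits along the chain element `K` lying between `J` and `I`.
  set K := I ∩ I₀ ∪ J
  have hK : K ∈ C := hC.union_mem (hC.inter_mem hI hI₀) hJ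
  have hJK : J ⊆ K := subset_union_right
  have hKI : K ⊆ I := union_subset inter_subset_left hJI
  have hinter : (I \ J) ∩ I₀ = K \ J := by
    ext; simp only [K, mem_inter_iff, Set.mem_sdiff, mem_union]; tauto
  have hdiff : (I \ J) \ I₀ = I \ K := by
    ext; simp only [K, mem_inter_iff, Set.mem_sdiff, mem_union]; tauto
  rw [hinter, hdiff, hC.chainPremeasure_diff hI hJ hJI]
  calc chainPremeasure C w (K \ J) + chainPremeasure C w (I \ K)
      ≤ ENNReal.ofReal (w K - w J) + ENNReal.ofReal (w I - w K) :=
        add_le_add (chainPremeasure_diff_le hK hJ hJK) (chainPremeasure_diff_le hI hK hKI)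
    _ = ENNReal.ofReal (w I - w J) := by
        rw [← ENNReal.ofReal_add (sub_nonneg.2 (hw hJ hK hJK)) (sub_nonneg.2 (hw hK hI hKI)),
          sub_add_sub_cancel']

end ChainPremeasure

section ChainMeasure

variable {Ω : Type*} [MeasurableSpace Ω] {C : Set (Set Ω)} {w : Set Ω → ℝ}

def IsSupermodularOnMeasurableSets (w : Set Ω → ℝ) : Prop :=
  ∀ X Y : Set Ω, MeasurableSet X → MeasurableSet Y → w X + w Y ≤ w (X ∪ Y) + w (X ∩ Y)

def IsContinuousFromBelow (w : Set Ω → ℝ) : Prop :=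
  ∀ S : ℕ → Set Ω, (∀ n, MeasurableSet (S n)) → Monotone S →
    Tendsto (fun n => w (S n)) atTop (𝓝 (w (⋃ n, S n)))

theorem IsChain.le_sum_sub_of_subset_biUnion_diff (hC : IsChain (· ⊆ ·) C)
    (hCm : ∀ I ∈ C, MeasurableSet I) (hw0 : w ∅ = 0) (hmono : MonotoneOn w {s | MeasurableSet s})
    (hsuper : IsSupermodularOnMeasurableSets w) {ι : Type*} {I J : ι → Set Ω}
    (hI : ∀ k, I k ∈ C) (hJ : ∀ k, J k ∈ C) (hJI : ∀ k, J k ⊆ I k) (s : Finset ι)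
    {E : Set Ω} (hE : MeasurableSet E) (hEs : E ⊆ ⋃ k ∈ s, I k \ J k) :
    w E ≤ ∑ k ∈ s, (w (I k) - w (J k)) := by
  classical
  induction s using Finset.strongInduction generalizing E with | H s ih =>
  rcases s.eq_empty_or_nonempty with rfl | hs
  · simp_all
  -- Peel off the piece whose outer set `I a` is largest: it contains `E`.
  obtain ⟨a, ha, hmax⟩ := s.exists_maximalFor I hs
  have hEa : E ⊆ I a := hEs.trans <| iUnion₂_subset fun k hk =>
    sdiff_subset.trans <| (hC.total (hI k) (hI a)).elim id (hmax hk)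
  have hrest : E ∩ J a ⊆ ⋃ k ∈ s.erase a, I k \ J k := by
    rintro x ⟨hxE, hxJ⟩
    obtain ⟨k, hk, hx⟩ := mem_iUnion₂.1 (hEs hxE)
    exact mem_iUnion₂.2 ⟨k, Finset.mem_erase.2 ⟨fun hka => hx.2 (by rwa [hka]), hk⟩, hx⟩
  have hJa := hCm _ (hJ a)
  have h₁ := ih _ (Finset.erase_ssubset ha) (hE.inter hJa) hrest
  have h₂ := hsuper E (J a) hE hJa
  have h₃ := hmono (hE.union hJa) (hCm _ (hI a)) (union_subset hEa (hJI a))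
  rw [← Finset.add_sum_erase s _ ha]
  linarith

theorem IsChain.ofReal_le_tsum_chainPremeasure (hC : IsChain (· ⊆ ·) C)
    (hCm : ∀ I ∈ C, MeasurableSet I) (hw0 : w ∅ = 0) (hmono : MonotoneOn w {s | MeasurableSet s})
    (hcont : IsContinuousFromBelow w) (hsuper : IsSupermodularOnMeasurableSets w)
    {E : Set Ω} (hE : MeasurableSet E) {f : ℕ → Set Ω} (hf : E ⊆ ⋃ n, f n) :
    ENNReal.ofReal (w E) ≤ ∑' n, chainPremeasure C w (f n) := by
  by_cases htop : ∃ n, chainPremeasure C w (f n) = ∞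
  · exact le_top.trans_eq (ENNReal.tsum_eq_top_of_eq_top htop).symm
  choose I hI J hJ hJI hIJ using fun n =>
    exists_diff_eq_of_chainPremeasure_ne_top fun hn => htop ⟨n, hn⟩
  obtain rfl : f = fun n => I n \ J n := funext fun n => (hIJ n).symm
  have hmeas : ∀ N, MeasurableSet (E ∩ accumulate (fun n => I n \ J n) N) := fun N =>
    hE.inter <| .iUnion fun k => .iUnion fun _ => (hCm _ (hI k)).diff (hCm _ (hJ k))
  have hlim : Tendsto (fun N => w (E ∩ accumulate (fun n => I n \ J n) N)) atTop (𝓝 (w E)) := by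
    have := hcont _ hmeas fun _ _ hNM => inter_subset_inter_right E (monotone_accumulate hNM)
    rwa [← inter_iUnion, iUnion_accumulate, inter_eq_left.2 hf] at this
  refine le_of_tendsto' (ENNReal.tendsto_ofReal hlim) fun N => ?_
  have hcover : E ∩ accumulate (fun n => I n \ J n) N ⊆ ⋃ k ∈ Finset.Iic N, I k \ J k := by
    rintro x ⟨-, hx⟩
    obtain ⟨k, hkN, hxk⟩ := mem_accumulate.1 hx
    exact mem_iUnion₂.2 ⟨k, Finset.mem_Iic.2 hkN, hxk⟩
  calc ENNReal.ofReal (w (E ∩ accumulate (fun n => I n \ J n) N))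
      ≤ ENNReal.ofReal (∑ k ∈ Finset.Iic N, (w (I k) - w (J k))) := ENNReal.ofReal_le_ofReal <|
        hC.le_sum_sub_of_subset_biUnion_diff hCm hw0 hmono hsuper hI hJ hJI _ (hmeas N) hcover
    _ = ∑ k ∈ Finset.Iic N, chainPremeasure C w (I k \ J k) := by
        rw [ENNReal.ofReal_sum_of_nonneg fun k _ =>
          sub_nonneg.2 (hmono (hCm _ (hJ k)) (hCm _ (hI k)) (hJI k))]
        exact Finset.sum_congr rfl fun k _ => (hC.chainPremeasure_diff (hI k) (hJ k) (hJI k)).symm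
    _ ≤ ∑' n, chainPremeasure C w (I n \ J n) := ENNReal.sum_le_tsum _

theorem IsChain.exists_measure_real_univ_eq_and_le_real (hC : IsChain (· ⊆ ·) C)
    (h0 : ∅ ∈ C) (hU : univ ∈ C) (hgen : MeasurableSpace.generateFrom C = ‹MeasurableSpace Ω›)
    (hw0 : w ∅ = 0) (hmono : MonotoneOn w {s | MeasurableSet s})
    (hcont : IsContinuousFromBelow w) (hsuper : IsSupermodularOnMeasurableSets w) :
    ∃ μ : Measure Ω, IsFiniteMeasure μ ∧ μ.real univ = w univ ∧
      ∀ E, MeasurableSet E → w E ≤ μ.real E := by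
  have hCm : ∀ I ∈ C, MeasurableSet I := fun I hI =>
    hgen ▸ MeasurableSpace.measurableSet_generateFrom hI
  set ν := OuterMeasure.ofFunction (chainPremeasure C w) (chainPremeasure_empty h0)
  have hν : ‹MeasurableSpace Ω› ≤ ν.caratheodory := hgen ▸ MeasurableSpace.generateFrom_le
    fun I₀ hI₀ => OuterMeasure.ofFunction_caratheodory
      (hC.chainPremeasure_inter_add_diff_le (hmono.mono hCm) hI₀)
  have hge : ∀ E, MeasurableSet E → ENNReal.ofReal (w E) ≤ ν.toMeasure hν E := fun E hE => by
    rw [toMeasure_apply ν hν hE, OuterMeasure.ofFunction_apply]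
    exact le_iInf₂ fun f hf => hC.ofReal_le_tsum_chainPremeasure hCm hw0 hmono hcont hsuper hE hf
  have huniv : ν.toMeasure hν univ = ENNReal.ofReal (w univ) := by
    refine le_antisymm ?_ (hge _ .univ)
    calc ν.toMeasure hν univ ≤ chainPremeasure C w (univ \ ∅) := by
          rw [toMeasure_apply ν hν .univ, sdiff_empty]; exact OuterMeasure.ofFunction_le _
      _ ≤ ENNReal.ofReal (w univ) := by
          simpa [hw0] using chainPremeasure_diff_le (w := w) hU h0 (empty_subset _)
  have : IsFiniteMeasure (ν.toMeasure hν) := ⟨huniv ▸ ENNReal.ofReal_lt_top⟩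
  have hw_nonneg : ∀ E, MeasurableSet E → 0 ≤ w E := fun E hE =>
    hw0 ▸ hmono MeasurableSet.empty hE (empty_subset E)
  refine ⟨ν.toMeasure hν, this, ?_, fun E hE => ?_⟩
  · rw [measureReal_def, huniv, ENNReal.toReal_ofReal (hw_nonneg _ .univ)]
  · exact (ENNReal.ofReal_le_iff_le_toReal (measure_ne_top _ _)).1 (hge E hE)

end ChainMeasure

section Anchored

variable {Ω : Type*} {C : Set (Set Ω)} {v : Set Ω → ℝ} {A B : Set Ω}

/-- A set function whose dominating measures, once restricted to `A`, dominate `v` on subsets of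
`A` and are tight at `B ⊆ A`. -/
def anchored (v : Set Ω → ℝ) (A B : Set Ω) (E : Set Ω) : ℝ :=
  v (E ∩ B) + v (E ∩ A ∪ B) - v B

theorem anchored_empty (hv0 : v ∅ = 0) : anchored v A B ∅ = 0 := by
  simp [anchored, hv0]

theorem anchored_univ (hBA : B ⊆ A) : anchored v A B univ = v A := by
  simp [anchored, union_eq_left.2 hBA]

theorem anchored_diff (hv0 : v ∅ = 0) (hBA : B ⊆ A) : anchored v A B (A \ B) = v A - v B := by
  simp [anchored, hv0, inter_eq_left.2 (sdiff_subset : A \ B ⊆ A), sdiff_union_of_subset hBA]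

variable [MeasurableSpace Ω]

theorem le_anchored (hB : MeasurableSet B) (hsuper : IsSupermodularOnMeasurableSets v)
    {E : Set Ω} (hE : MeasurableSet E) (hEA : E ⊆ A) : v E ≤ anchored v A B E := by
  have := hsuper E B hE hB
  rw [anchored, inter_eq_left.2 hEA]
  linarith

theorem monotoneOn_anchored (hA : MeasurableSet A) (hB : MeasurableSet B)
    (hmono : MonotoneOn v {s | MeasurableSet s}) :
    MonotoneOn (anchored v A B) {s | MeasurableSet s} := fun X hX Y hY hXY => by
  have h₁ := hmono (hX.inter hB) (hY.inter hB) (inter_subset_inter_left B hXY)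
  have h₂ := hmono ((hX.inter hA).union hB) ((hY.inter hA).union hB)
    (union_subset_union_left B (inter_subset_inter_left A hXY))
  simp only [anchored]
  linarith

theorem isContinuousFromBelow_anchored (hA : MeasurableSet A) (hB : MeasurableSet B)
    (hcont : IsContinuousFromBelow v) : IsContinuousFromBelow (anchored v A B) :=
  fun S hS hSmono => by
  have h₁ := hcont (fun n => S n ∩ B) (fun n => (hS n).inter hB)
    fun _ _ h => inter_subset_inter_left B (hSmono h)
  have h₂ := hcont (fun n => S n ∩ A ∪ B) (fun n => ((hS n).inter hA).union hB)
    fun _ _ h => union_subset_union_left B (inter_subset_inter_left A (hSmono h))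
  rw [← iUnion_inter] at h₁
  rw [← iUnion_union, ← iUnion_inter] at h₂
  exact (h₁.add h₂).sub_const (v B)

theorem isSupermodularOnMeasurableSets_anchored (hA : MeasurableSet A) (hB : MeasurableSet B)
    (hsuper : IsSupermodularOnMeasurableSets v) :
    IsSupermodularOnMeasurableSets (anchored v A B) := fun X Y hX hY => by
  have h₁ := hsuper (X ∩ B) (Y ∩ B) (hX.inter hB) (hY.inter hB)
  have h₂ := hsuper (X ∩ A ∪ B) (Y ∩ A ∪ B) ((hX.inter hA).union hB) ((hY.inter hA).union hB)
  rw [← union_inter_distrib_right, ← inter_inter_distrib_right] at h₁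
  rw [← union_union_distrib_right, ← union_inter_distrib_right, ← inter_union_distrib_right,
    ← inter_inter_distrib_right] at h₂
  simp only [anchored]
  linarith

theorem IsChain.exists_measure_restrict_eq_self_and_real_eq (hC : IsChain (· ⊆ ·) C)
    (h0 : ∅ ∈ C) (hU : univ ∈ C) (hgen : MeasurableSpace.generateFrom C = ‹MeasurableSpace Ω›)
    (hv0 : v ∅ = 0) (hmono : MonotoneOn v {s | MeasurableSet s}) (hcont : IsContinuousFromBelow v)
    (hsuper : IsSupermodularOnMeasurableSets v)
    (hA : MeasurableSet A) (hB : MeasurableSet B) (hBA : B ⊆ A) :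
    ∃ μ : Measure Ω, μ.restrict A = μ ∧ IsFiniteMeasure μ ∧ μ.real A = v A ∧
      (∀ E, MeasurableSet E → E ⊆ A → v E ≤ μ.real E) ∧ μ.real B = v B := by
  obtain ⟨μ, hfin, huniv, hge⟩ := hC.exists_measure_real_univ_eq_and_le_real h0 hU hgen
    (anchored_empty hv0) (monotoneOn_anchored hA hB hmono)
    (isContinuousFromBelow_anchored hA hB hcont)
    (isSupermodularOnMeasurableSets_anchored hA hB hsuper)
  rw [anchored_univ hBA] at huniv
  have hge_v : ∀ E, MeasurableSet E → E ⊆ A → v E ≤ μ.real E := fun E hE hEA =>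
    (le_anchored hB hsuper hE hEA).trans (hge E hE)
  have hμA : μ.real A = v A :=
    (huniv ▸ measureReal_mono (subset_univ A)).antisymm (hge_v A hA subset_rfl)
  have hμB : μ.real B = v B := by
    have := hge _ (hA.diff hB)
    rw [anchored_diff hv0 hBA, measureReal_sdiff hBA hB] at this
    linarith [hge_v B hB hBA]
  have hrestrict : ∀ E, MeasurableSet E → E ⊆ A → (μ.restrict A).real E = μ.real E :=
    fun E hE hEA => by rw [measureReal_restrict_apply hE, inter_eq_left.2 hEA]
  refine ⟨μ.restrict A, Measure.restrict_restrict_of_subset subset_rfl, inferInstance, ?_,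
    fun E hE hEA => ?_, ?_⟩
  · rw [hrestrict A hA subset_rfl, hμA]
  · rw [hrestrict E hE hEA]; exact hge_v E hE hEA
  · rw [hrestrict B hB hBA, hμB]

end Anchored

theorem supermodular_inf_representation {Ω : Type*} [m : MeasurableSpace Ω]
    (I : Set (Set Ω)) (h0 : ∅ ∈ I) (hU : Set.univ ∈ I)
    (hchain : ∀ I₁ ∈ I, ∀ I₂ ∈ I, I₁ ⊆ I₂ ∨ I₂ ⊆ I₁)
    (hgen : MeasurableSpace.generateFrom I = m)
    (v : Set Ω → ℝ) (hv : IsSupermodular v)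
    (A B : Set Ω) (hA : MeasurableSet A) (hB : MeasurableSet B) (hBA : B ⊆ A) :
    v B = sInf {x : ℝ | ∃ μ : Measure Ω, μ.restrict A = μ ∧ IsFiniteMeasure μ ∧
        (μ A).toReal = v A ∧
        (∀ E : Set Ω, MeasurableSet E → E ⊆ A → v E ≤ (μ E).toReal) ∧
        x = (μ B).toReal} ∧
    ∃ μ : Measure Ω, μ.restrict A = μ ∧ IsFiniteMeasure μ ∧
      (μ A).toReal = v A ∧
      (∀ E : Set Ω, MeasurableSet E → E ⊆ A → v E ≤ (μ E).toReal) ∧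
      (μ B).toReal = v B := by
  obtain ⟨hv0, hmono, hcont, -, hsuper⟩ := hv
  have hI : IsChain (· ⊆ ·) I := fun I₁ h₁ I₂ h₂ _ => hchain I₁ h₁ I₂ h₂
  obtain ⟨μ, hμA, hμfin, hμv, hμge, hμB⟩ := hI.exists_measure_restrict_eq_self_and_real_eq h0 hU
    hgen hv0 (fun X hX Y hY => hmono X Y hX hY) hcont hsuper hA hB hBA
  refine ⟨Eq.symm (IsLeast.csInf_eq ⟨⟨μ, hμA, hμfin, hμv, hμge, hμB.symm⟩, ?_⟩),
    μ, hμA, hμfin, hμv, hμge, hμB⟩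
  rintro _ ⟨ν, -, -, -, hν, rfl⟩
  exact hν B hB hBA
end

section
/- Let (Ω,𝓕) be a measurable space with 𝓕 = σ({J₁, J₂, …}) generated by a countable family of measurable sets. Define f : Ω → [0,1) by f = Σₙ 3⁻ⁿ 𝟙_{Jₙ}. Then f is 𝓕-measurable, and the class 𝓘 = { f⁻¹([0,a)) : 0 ≤ a ≤ 1 } contains ∅ and Ω, is totally ordered by inclusion, and satisfies σ(𝓘) = 𝓕. -/
/-!
Record by `memBits J ω : ℕ → Bool` which of the sets `J n` contain `ω`; then `f` is the ternary
encoding `b ↦ Σ 3⁻⁽ⁿ⁺¹⁾ bₙ` of the Cantor space composed with `memBits J`. Since `1/3 < 1/2` the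
encoding is injective, and being continuous on a compact space it is a measurable embedding. So
every σ-algebra for which `f` is measurable makes `memBits J` measurable, i.e. contains every
`J n`. As `f` takes values in `[0, 1/2]`, the sublevel sets `{f < a}`, `a ∈ [0, 1]`, already
generate such a σ-algebra.
-/

open MeasureTheory Set
open Cardinal (cantorFunction cantorFunctionAux cantorFunction_le cantorFunction_injective)

section CantorFunction

variable {c : ℝ}

theorem continuous_cantorFunction (h1 : 0 ≤ c) (h2 : c < 1) : Continuous (cantorFunction c) := by
  refine continuous_tsum (u := fun n => c ^ n) (fun n => ?_)
    (summable_geometric_of_lt_one h1 h2) (fun n b => ?_)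
  · exact (continuous_of_discreteTopology (f := fun x : Bool => cond x (c ^ n) 0)).comp
      (continuous_apply n)
  · cases h : b n <;> simp [cantorFunctionAux, h, abs_of_nonneg h1, pow_nonneg h1]

theorem measurableEmbedding_cantorFunction (h1 : 0 < c) (h2 : c < 1 / 2) :
    MeasurableEmbedding (cantorFunction c) :=
  ((continuous_cantorFunction h1.le (by linarith)).isClosedEmbedding
    (cantorFunction_injective h1 h2)).measurableEmbedding

theorem cantorFunction_mem_Icc (h1 : 0 ≤ c) (h2 : c < 1) (b : ℕ → Bool) :
    cantorFunction c b ∈ Icc 0 (1 - c)⁻¹ := by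
  constructor
  · simpa [cantorFunction, cantorFunctionAux] using
      cantorFunction_le h1 h2 (f := fun _ => false) (g := b) (by simp)
  · simpa [cantorFunction, cantorFunctionAux, tsum_geometric_of_lt_one h1 h2] using
      cantorFunction_le h1 h2 (f := b) (g := fun _ => true) (by simp)

end CantorFunction

section MemBits

variable {Ω : Type*} (J : ℕ → Set Ω)

open Classical in
noncomputable def memBits (ω : Ω) : ℕ → Bool := fun n => decide (ω ∈ J n)

theorem measurable_memBits_iff {mΩ : MeasurableSpace Ω} :
    Measurable (memBits J) ↔ ∀ n, MeasurableSet (J n) := by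
  rw [measurable_pi_iff]
  have hpre : ∀ n, (fun ω => memBits J ω n) ⁻¹' {true} = J n := fun n => by
    ext; simp [memBits]
  exact forall_congr' fun n => ⟨fun h => hpre n ▸ h (measurableSet_singleton true),
    fun h => measurable_to_bool ((hpre n).symm ▸ h)⟩

theorem tsum_pow_succ_mul_indicator_eq (c : ℝ) (ω : Ω) :
    ∑' n, c ^ (n + 1) * (J n).indicator 1 ω = c * cantorFunction c (memBits J ω) := by
  rw [cantorFunction, ← tsum_mul_left]
  congr 1 with n
  by_cases h : ω ∈ J n <;> simp [h, memBits, cantorFunctionAux, pow_succ, mul_comm]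

end MemBits

theorem measurable_of_measurableSet_setOf_lt_of_mem_Icc {Ω : Type*}
    {mΩ : MeasurableSpace Ω} {f : Ω → ℝ} {a b : ℝ} (hf : ∀ ω, f ω ∈ Icc a b)
    (hlt : ∀ x ∈ Icc a b, MeasurableSet {ω | f ω < x}) : Measurable f := by
  refine measurable_of_Iio fun x => ?_
  rcases lt_or_ge x a with hxa | hax
  · rw [show f ⁻¹' Iio x = ∅ from
      eq_empty_of_forall_notMem fun ω hω => (hf ω).1.not_gt (lt_trans hω hxa)]
    exact MeasurableSet.empty
  rcases le_or_gt x b with hxb | hbx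
  · exact hlt x ⟨hax, hxb⟩
  · rw [show f ⁻¹' Iio x = univ from eq_univ_of_forall fun ω => (hf ω).2.trans_lt hbx]
    exact MeasurableSet.univ

theorem ternary_embedding_generates {Ω : Type*} [m : MeasurableSpace Ω]
    (J : ℕ → Set Ω) (hJ : ∀ n, MeasurableSet (J n))
    (hgen : MeasurableSpace.generateFrom {S | ∃ n : ℕ, S = J n} = m)
    (f : Ω → ℝ) (hf : ∀ ω, f ω = ∑' n : ℕ, (3:ℝ)⁻¹ ^ (n + 1) * (J n).indicator 1 ω) :
    Measurable f ∧ (∀ ω, f ω ∈ Set.Ico (0:ℝ) 1) ∧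
    (∅ ∈ ({S | ∃ a ∈ Set.Icc (0:ℝ) 1, S = {ω | f ω < a}} : Set (Set Ω))) ∧
    (Set.univ ∈ ({S | ∃ a ∈ Set.Icc (0:ℝ) 1, S = {ω | f ω < a}} : Set (Set Ω))) ∧
    (∀ S₁ ∈ ({S | ∃ a ∈ Set.Icc (0:ℝ) 1, S = {ω | f ω < a}} : Set (Set Ω)),
      ∀ S₂ ∈ ({S | ∃ a ∈ Set.Icc (0:ℝ) 1, S = {ω | f ω < a}} : Set (Set Ω)),
        S₁ ⊆ S₂ ∨ S₂ ⊆ S₁) ∧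
    MeasurableSpace.generateFrom {S | ∃ a ∈ Set.Icc (0:ℝ) 1, S = {ω | f ω < a}} = m := by
  have hencode : MeasurableEmbedding fun b => (3:ℝ)⁻¹ * cantorFunction 3⁻¹ b :=
    (measurableEmbedding_mulLeft₀ (by norm_num)).comp
      (measurableEmbedding_cantorFunction (by norm_num) (by norm_num))
  have hf_eq : f = (fun b => (3:ℝ)⁻¹ * cantorFunction 3⁻¹ b) ∘ memBits J :=
    funext fun ω => (hf ω).trans (tsum_pow_succ_mul_indicator_eq J _ ω)
  have hrange : ∀ ω, f ω ∈ Icc (0:ℝ) (1 / 2) := fun ω => by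
    obtain ⟨h0, h1⟩ :=
      cantorFunction_mem_Icc (c := 3⁻¹) (by norm_num) (by norm_num) (memBits J ω)
    rw [hf_eq]
    constructor <;> norm_num at h1 ⊢ <;> linarith
  have hmeas : Measurable f :=
    hf_eq ▸ hencode.measurable.comp ((measurable_memBits_iff J).2 hJ)
  refine ⟨hmeas, fun ω => ⟨(hrange ω).1, by linarith [(hrange ω).2]⟩,
    ⟨0, by norm_num, ?_⟩, ⟨1, by norm_num, ?_⟩, ?_, ?_⟩
  · exact (eq_empty_of_forall_notMem fun ω hω => (hrange ω).1.not_gt hω).symm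
  · exact (eq_univ_of_forall fun ω => show f ω < 1 by linarith [(hrange ω).2]).symm
  · rintro _ ⟨a₁, -, rfl⟩ _ ⟨a₂, -, rfl⟩
    rcases le_total a₁ a₂ with h | h
    · exact .inl fun ω hω => lt_of_lt_of_le hω h
    · exact .inr fun ω hω => lt_of_lt_of_le hω h
  refine le_antisymm (MeasurableSpace.generateFrom_le ?_)
    (hgen ▸ MeasurableSpace.generateFrom_le ?_)
  · rintro _ ⟨a, -, rfl⟩
    exact measurableSet_lt hmeas measurable_const
  · rintro _ ⟨n, rfl⟩
    set G := MeasurableSpace.generateFrom {S | ∃ a ∈ Icc (0:ℝ) 1, S = {ω | f ω < a}}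
    have hf_G : Measurable[G] f := measurable_of_measurableSet_setOf_lt_of_mem_Icc
      (fun ω => ⟨(hrange ω).1, (hrange ω).2.trans (by norm_num)⟩)
      (fun a ha => MeasurableSpace.measurableSet_generateFrom ⟨a, ha, rfl⟩)
    have hbits : Measurable[G] (memBits J) :=
      (hencode.measurable_comp_iff (mα := G)).1 (hf_eq ▸ hf_G)
    exact (measurable_memBits_iff (mΩ := G) J).1 hbits n
end

section
/- For every countably generated σ-algebra 𝓕 on Ω (in particular the Borel σ-algebra of any second-countable topological space, e.g. a Polish space), there exists a class 𝓘 ⊆ 𝓕 containing ∅ and Ω, totally ordered with respect to inclusion, such that σ(𝓘) = 𝓕. -/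
/-!
A countably generated σ-algebra is the preimage `f⁻¹(𝓑(ℝ))` of the Borel σ-algebra under a single
real function `f`: encode a point by which generators contain it, a point of the Cantor space
`ℕ → Bool`, and embed the Cantor space measurably into `ℝ`. Since `𝓑(ℝ)` is generated by the
rays `Iio t`, the σ-algebra is generated by their preimages `{f < t}`, and these form a chain.
-/

open Set MeasurableSpace

open scoped Classical in
theorem MeasurableSpace.comap_decide_mem_eq_generateFrom {α ι : Type*} (t : ι → Set α) :
    MeasurableSpace.pi.comap (fun x i ↦ decide (x ∈ t i)) = generateFrom (range t) := by
  refine le_antisymm ?_ (generateFrom_le ?_)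
  · let := generateFrom (range t)
    refine (measurable_pi_iff.2 fun i ↦ measurable_to_bool ?_).comap_le
    simpa [preimage] using measurableSet_generateFrom (mem_range_self (f := t) i)
  · rintro _ ⟨i, rfl⟩
    exact ⟨{y | y i = true}, measurableSet_eq_fun (measurable_pi_apply i) measurable_const,
      by ext; simp⟩

theorem MeasurableSpace.exists_comap_real_eq (α : Type*) [m : MeasurableSpace α]
    [CountablyGenerated α] : ∃ f : α → ℝ, (borel ℝ).comap f = m := by
  obtain ⟨e, he⟩ := MeasureTheory.exists_measurableEmbedding_real (ℕ → Bool)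
  refine ⟨e ∘ mapNatBool α, ?_⟩
  rw [← comap_comp, ← BorelSpace.measurable_eq, he.comap_eq]
  exact (comap_decide_mem_eq_generateFrom _).trans (generateFrom_natGeneratingSequence α)

theorem comap_eq_generateFrom_preimage_Iio {α β : Type*} [TopologicalSpace β]
    [SecondCountableTopology β] [LinearOrder β] [OrderTopology β] (f : α → β) :
    (borel β).comap f = generateFrom (range fun b ↦ f ⁻¹' Iio b) := by
  rw [borel_eq_generateFrom_Iio, comap_generateFrom, ← range_comp]
  rfl

theorem isChain_range_preimage_Iio {α β : Type*} [LinearOrder β] (f : α → β) :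
    IsChain (· ⊆ ·) (range fun b ↦ f ⁻¹' Iio b) :=
  Monotone.isChain_range fun _ _ h ↦ preimage_mono (Iio_subset_Iio h)

theorem countably_generated_has_chain_generator {Ω : Type*} [m : MeasurableSpace Ω]
    (h : ∃ 𝓙 : Set (Set Ω), 𝓙.Countable ∧ MeasurableSpace.generateFrom 𝓙 = m) :
    ∃ I : Set (Set Ω), ∅ ∈ I ∧ Set.univ ∈ I ∧
      (∀ I₁ ∈ I, ∀ I₂ ∈ I, I₁ ⊆ I₂ ∨ I₂ ⊆ I₁) ∧
      MeasurableSpace.generateFrom I = m := by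
  obtain ⟨𝓙, h𝓙, hgen⟩ := h
  have : CountablyGenerated Ω := ⟨𝓙, h𝓙, hgen.symm⟩
  obtain ⟨f, hf⟩ := exists_comap_real_eq Ω
  set 𝓡 := range fun t : ℝ ↦ f ⁻¹' Iio t
  have hchain : IsChain (· ⊆ ·) (insert ∅ (insert univ 𝓡)) :=
    ((isChain_range_preimage_Iio f).insert fun s _ _ ↦ .inr (subset_univ s)).insert
      fun s _ _ ↦ .inl (empty_subset s)
  refine ⟨insert ∅ (insert univ 𝓡), mem_insert _ _, mem_insert_of_mem _ (mem_insert _ _),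
    fun _ h₁ _ h₂ ↦ hchain.total h₁ h₂, ?_⟩
  rw [MeasurableSpace.generateFrom_insert_empty, MeasurableSpace.generateFrom_insert_univ,
    ← comap_eq_generateFrom_preimage_Iio, hf]
end

section
/- Let 𝓘 be a totally ordered class containing ∅ and Ω, let 𝓙 be the algebra generated by 𝓘, let v : 𝓕 → ℝ be submodular, and let μ be the finitely additive nonnegative set function on 𝓙 given by μ(⋃ᵢ(Cᵢ\Dᵢ)) = Σᵢ(v(Cᵢ)−v(Dᵢ)). If v is continuous along monotone sequences, then μ is countably additive on 𝓙, and hence extends uniquely to a measure on σ(𝓙). -/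
open MeasureTheory Set Filter Topology

open scoped ENNReal NNReal

namespace ChainAux

variable {Ω : Type*} {I : Set (Set Ω)}

/-- A nested chain representation. -/
def Rep (I : Set (Set Ω)) (n : ℕ) (C D : ℕ → Set Ω) : Prop :=
  (∀ i < n, C i ∈ I) ∧ (∀ i < n, D i ∈ I) ∧
  (∀ i < n, D i ⊆ C i) ∧ (∀ i, i + 1 < n → C (i + 1) ⊆ D i)

lemma mem_iff {S : Set Ω} :
    S ∈ chainAlgebra I ↔ ∃ n C D, Rep I n C D ∧ S = ⋃ i ∈ Finset.range n, C i \ D i := by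
  constructor
  · rintro ⟨n, C, D, h1, h2, h3, h4, h5⟩; exact ⟨n, C, D, ⟨h1, h2, h3, h4⟩, h5⟩
  · rintro ⟨n, C, D, ⟨h1, h2, h3, h4⟩, h5⟩; exact ⟨n, C, D, h1, h2, h3, h4, h5⟩

lemma Rep.C_anti {n : ℕ} {C D : ℕ → Set Ω} (h : Rep I n C D) :
    ∀ i j, i ≤ j → j < n → C j ⊆ C i := by
  intro i j hij hjn
  induction j with
  | zero => simpa [Nat.le_zero.mp hij] using subset_rfl
  | succ k ih =>
    rcases Nat.eq_or_lt_of_le hij with rfl | hlt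
    · exact subset_rfl
    · exact ((h.2.2.2 k hjn).trans (h.2.2.1 k (by omega))).trans
        (ih (by omega) (by omega))

lemma Rep.C_subset_D {n : ℕ} {C D : ℕ → Set Ω} (h : Rep I n C D) :
    ∀ i j, i < j → j < n → C j ⊆ D i := by
  intro i j hij hjn
  exact (h.C_anti (i+1) j hij hjn).trans (h.2.2.2 i (by omega))

lemma Rep.D_anti {n : ℕ} {C D : ℕ → Set Ω} (h : Rep I n C D) :
    ∀ i j, i ≤ j → j < n → D j ⊆ D i := by
  intro i j hij hjn
  rcases Nat.eq_or_lt_of_le hij with rfl | hlt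
  · exact subset_rfl
  · exact (h.2.2.1 j hjn).trans (h.C_subset_D i j hlt hjn)

lemma inter_mem_of_chain (hchain : ∀ I₁ ∈ I, ∀ I₂ ∈ I, I₁ ⊆ I₂ ∨ I₂ ⊆ I₁)
    {A B : Set Ω} (hA : A ∈ I) (hB : B ∈ I) : A ∩ B ∈ I := by
  rcases hchain A hA B hB with h | h
  · rwa [inter_eq_left.mpr h]
  · rwa [inter_eq_right.mpr h]

lemma union_mem_of_chain (hchain : ∀ I₁ ∈ I, ∀ I₂ ∈ I, I₁ ⊆ I₂ ∨ I₂ ⊆ I₁)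
    {A B : Set Ω} (hA : A ∈ I) (hB : B ∈ I) : A ∪ B ∈ I := by
  rcases hchain A hA B hB with h | h
  · rwa [union_eq_right.mpr h]
  · rwa [union_eq_left.mpr h]

/-- prepend an element to a sequence -/
def cons (a : Set Ω) (f : ℕ → Set Ω) : ℕ → Set Ω
  | 0 => a
  | j + 1 => f j

lemma peel (C D : ℕ → Set Ω) (n : ℕ) :
    (⋃ i ∈ Finset.range (n+1), C i \ D i)
      = (C 0 \ D 0) ∪ ⋃ i ∈ Finset.range n, C (i+1) \ D (i+1) := by
  ext x
  simp only [Set.mem_iUnion, Finset.mem_range, Set.mem_union]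
  constructor
  · rintro ⟨i, hi, hx⟩
    cases i with
    | zero => exact Or.inl hx
    | succ j => exact Or.inr ⟨j, by omega, hx⟩
  · rintro (hx | ⟨j, hj, hx⟩)
    · exact ⟨0, by omega, hx⟩
    · exact ⟨j + 1, by omega, hx⟩

lemma peel_cons (a b : Set Ω) (C D : ℕ → Set Ω) (n : ℕ) :
    (⋃ i ∈ Finset.range (n+1), cons a C i \ cons b D i)
      = (a \ b) ∪ ⋃ i ∈ Finset.range n, C i \ D i := by
  rw [peel]; rfl

lemma Rep.cons {n : ℕ} {C D : ℕ → Set Ω} (h : Rep I n C D) {a b : Set Ω}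
    (ha : a ∈ I) (hb : b ∈ I) (hba : b ⊆ a) (htop : 0 < n → C 0 ⊆ b) :
    Rep I (n+1) (ChainAux.cons a C) (ChainAux.cons b D) := by
  refine ⟨?_, ?_, ?_, ?_⟩
  · rintro (_ | i) hi
    · exact ha
    · exact h.1 i (by omega)
  · rintro (_ | i) hi
    · exact hb
    · exact h.2.1 i (by omega)
  · rintro (_ | i) hi
    · exact hba
    · exact h.2.2.1 i (by omega)
  · rintro (_ | i) hi
    · exact htop (by omega)
    · exact h.2.2.2 i (by omega)

lemma Rep.tail {n : ℕ} {C D : ℕ → Set Ω} (h : Rep I (n+1) C D) :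
    Rep I n (fun i => C (i+1)) (fun i => D (i+1)) :=
  ⟨fun i hi => h.1 _ (by omega), fun i hi => h.2.1 _ (by omega),
   fun i hi => h.2.2.1 _ (by omega), fun i hi => h.2.2.2 _ (by omega)⟩


lemma subset_bigU {C : ℕ → Set Ω} {n i : ℕ} (hi : i < n) :
    C i ⊆ ⋃ j ∈ Finset.range n, C j := by
  intro y hy
  simp only [Set.mem_iUnion, Finset.mem_range]
  exact ⟨i, hi, hy⟩

lemma union_diff (hchain : ∀ I₁ ∈ I, ∀ I₂ ∈ I, I₁ ⊆ I₂ ∨ I₂ ⊆ I₁) :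
    ∀ n : ℕ, ∀ C D : ℕ → Set Ω, Rep I n C D → ∀ E F : Set Ω, E ∈ I → F ∈ I → F ⊆ E →
    ∃ k C' D', Rep I k C' D' ∧
      ((⋃ i ∈ Finset.range n, C i \ D i) ∪ (E \ F) = ⋃ i ∈ Finset.range k, C' i \ D' i) ∧
      ∀ i < k, C' i ⊆ (⋃ j ∈ Finset.range n, C j) ∪ E := by
  intro n
  induction n using Nat.strong_induction_on with
  | _ n IH =>
  intro C D hrep E F hE hF hFE
  match n, hrep with
  | 0, hrep =>
    refine ⟨1, fun _ => E, fun _ => F, ⟨?_, ?_, ?_, ?_⟩, ?_, ?_⟩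
    · exact fun i _ => hE
    · exact fun i _ => hF
    · exact fun i _ => hFE
    · intro i hi; omega
    · simp
    · intro i _; exact subset_union_right
  | (n' + 1), hrep =>
    have hD0C0 : D 0 ⊆ C 0 := hrep.2.2.1 0 (by omega)
    have hC0 : C 0 ∈ I := hrep.1 0 (by omega)
    have hD0 : D 0 ∈ I := hrep.2.1 0 (by omega)
    have htailBig : (⋃ j ∈ Finset.range n', C (j+1)) ⊆ ⋃ j ∈ Finset.range (n'+1), C j := by
      intro y hy
      simp only [Set.mem_iUnion, Finset.mem_range] at hy ⊢
      obtain ⟨j, hj, hy⟩ := hy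
      exact ⟨j + 1, by omega, hy⟩
    have htailD0 : (⋃ j ∈ Finset.range n', C (j+1)) ⊆ D 0 := by
      intro y hy
      simp only [Set.mem_iUnion, Finset.mem_range] at hy
      obtain ⟨j, hj, hy⟩ := hy
      exact hrep.C_subset_D 0 (j+1) (by omega) (by omega) hy
    have hC0Big : C 0 ⊆ ⋃ j ∈ Finset.range (n'+1), C j := subset_bigU (by omega)
    rcases hchain (C 0) hC0 F hF with hC0F | hFC0
    · -- Case A : C 0 ⊆ F, prepend (E, F)
      refine ⟨n' + 2, cons E C, cons F D, hrep.cons hE hF hFE (fun _ => hC0F), ?_, ?_⟩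
      · rw [peel_cons, union_comm]
      · rintro (_ | i) hi
        · exact subset_union_right
        · exact (subset_bigU (show i < n' + 1 by omega)).trans subset_union_left
    · rcases hchain (C 0) hC0 E hE with hC0E | hEC0
      · -- Case B1 : C 0 ⊆ E, merge top piece into (E, D 0 ∩ F)
        have hkey : (C 0 \ D 0) ∪ (E \ F) = E \ (D 0 ∩ F) := by
          ext x
          constructor
          · rintro (⟨h1, h2⟩ | ⟨h1, h2⟩)
            · exact ⟨hC0E h1, fun hx => h2 hx.1⟩
            · exact ⟨h1, fun hx => h2 hx.2⟩
          · rintro ⟨h1, h2⟩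
            by_cases hxF : x ∈ F
            · exact Or.inl ⟨hFC0 hxF, fun hD => h2 ⟨hD, hxF⟩⟩
            · exact Or.inr ⟨h1, hxF⟩
        obtain ⟨k, C', D', hrep', heq', hinv'⟩ :=
          IH n' (by omega) _ _ hrep.tail E (D 0 ∩ F) hE (inter_mem_of_chain hchain hD0 hF)
            ((inter_subset_left).trans (hD0C0.trans hC0E))
        refine ⟨k, C', D', hrep', ?_, ?_⟩
        · rw [peel, union_comm (C 0 \ D 0), union_assoc, hkey, heq']
        · intro i hi
          exact (hinv' i hi).trans (union_subset_union_left E htailBig)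
      · -- Case B2 : E ⊆ C 0
        rcases hchain E hE (D 0) hD0 with hED0 | hD0E
        · -- B2a : E ⊆ D 0 : recurse on tail, then prepend (C 0, D 0)
          obtain ⟨k, C', D', hrep', heq', hinv'⟩ :=
            IH n' (by omega) _ _ hrep.tail E F hE hF hFE
          have htop : 0 < k → C' 0 ⊆ D 0 := by
            intro hk
            refine (hinv' 0 hk).trans (union_subset htailD0 hED0)
          refine ⟨k + 1, cons (C 0) C', cons (D 0) D', hrep'.cons hC0 hD0 hD0C0 htop, ?_, ?_⟩
          · rw [peel, union_assoc, heq', peel_cons]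
          · rintro (_ | i) hi
            · exact hC0Big.trans subset_union_left
            · exact (hinv' i (by omega)).trans (union_subset_union_left E htailBig)
        · -- B2b : D 0 ⊆ E
          rcases hchain F hF (D 0) hD0 with hFD0 | hD0F
          · -- B2b-ii : F ⊆ D 0 : top becomes C 0 \ F, recurse
            have hkey : (C 0 \ D 0) ∪ (E \ F) = C 0 \ F := by
              ext x
              constructor
              · rintro (⟨h1, h2⟩ | ⟨h1, h2⟩)
                · exact ⟨h1, fun hx => h2 (hFD0 hx)⟩
                · exact ⟨hEC0 h1, h2⟩
              · rintro ⟨h1, h2⟩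
                by_cases hxD : x ∈ D 0
                · exact Or.inr ⟨hD0E hxD, h2⟩
                · exact Or.inl ⟨h1, hxD⟩
            obtain ⟨k, C', D', hrep', heq', hinv'⟩ :=
              IH n' (by omega) _ _ hrep.tail (C 0) F hC0 hF (hFD0.trans hD0C0)
            refine ⟨k, C', D', hrep', ?_, ?_⟩
            · rw [peel, union_comm (C 0 \ D 0), union_assoc, hkey, heq']
            · intro i hi
              exact (hinv' i hi).trans
                (union_subset (htailBig.trans subset_union_left)
                  (hC0Big.trans subset_union_left))
          · -- B2b-i : D 0 ⊆ F : extra piece absorbed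
            refine ⟨n' + 1, C, D, hrep, ?_, ?_⟩
            · rw [union_eq_left]
              intro x hx
              rw [peel]
              exact Or.inl ⟨hEC0 hx.1, fun hD => hx.2 (hD0F hD)⟩
            · intro i hi
              exact (subset_bigU hi).trans subset_union_left


lemma empty_mem : (∅ : Set Ω) ∈ chainAlgebra I := by
  refine mem_iff.mpr ⟨0, fun _ => ∅, fun _ => ∅, ⟨?_, ?_, ?_, ?_⟩, by simp⟩ <;> intro i hi <;> omega

lemma mem_of_mem_I (h0 : ∅ ∈ I) {A : Set Ω} (hA : A ∈ I) : A ∈ chainAlgebra I := by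
  refine mem_iff.mpr ⟨1, fun _ => A, fun _ => ∅, ⟨fun _ _ => hA, fun _ _ => h0,
    fun _ _ => empty_subset A, fun i hi => by omega⟩, by simp⟩

lemma union_diff_mem (hchain : ∀ I₁ ∈ I, ∀ I₂ ∈ I, I₁ ⊆ I₂ ∨ I₂ ⊆ I₁)
    {S E F : Set Ω} (hS : S ∈ chainAlgebra I) (hE : E ∈ I) (hF : F ∈ I) :
    S ∪ (E \ F) ∈ chainAlgebra I := by
  obtain ⟨n, C, D, hrep, rfl⟩ := mem_iff.mp hS
  rcases hchain E hE F hF with hEF | hFE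
  · rw [diff_eq_empty.mpr hEF, union_empty]
    exact mem_iff.mpr ⟨n, C, D, hrep, rfl⟩
  · obtain ⟨k, C', D', hrep', heq', _⟩ := union_diff hchain n C D hrep E F hE hF hFE
    exact mem_iff.mpr ⟨k, C', D', hrep', heq'⟩

lemma biUnion_diff_mem (hchain : ∀ I₁ ∈ I, ∀ I₂ ∈ I, I₁ ⊆ I₂ ∨ I₂ ⊆ I₁)
    {ι : Type*} (t : Finset ι) (E F : ι → Set Ω)
    (hE : ∀ i ∈ t, E i ∈ I) (hF : ∀ i ∈ t, F i ∈ I) :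
    (⋃ i ∈ t, E i \ F i) ∈ chainAlgebra I := by
  classical
  induction t using Finset.induction_on with
  | empty => simpa using empty_mem
  | @insert a s ha ih =>
    rw [Finset.set_biUnion_insert, union_comm]
    exact union_diff_mem hchain
      (ih (fun i hi => hE i (Finset.mem_insert_of_mem hi))
          (fun i hi => hF i (Finset.mem_insert_of_mem hi)))
      (hE a (Finset.mem_insert_self a s)) (hF a (Finset.mem_insert_self a s))

lemma compl_mem (hchain : ∀ I₁ ∈ I, ∀ I₂ ∈ I, I₁ ⊆ I₂ ∨ I₂ ⊆ I₁)
    (h0 : ∅ ∈ I) (hU : Set.univ ∈ I) {S : Set Ω} (hS : S ∈ chainAlgebra I) :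
    Sᶜ ∈ chainAlgebra I := by
  classical
  obtain ⟨n, C, D, hrep, rfl⟩ := mem_iff.mp hS
  have key : (⋃ i ∈ Finset.range n, C i \ D i)ᶜ
      = ⋃ i ∈ Finset.range (n+1),
          (if i = 0 then Set.univ else D (i-1)) \ (if i = n then ∅ else C i) := by
    ext x
    simp only [Set.mem_compl_iff, Set.mem_iUnion, Finset.mem_range, Set.mem_diff, not_exists]
    constructor
    · intro hx
      by_cases hn : n = 0
      · exact ⟨0, by omega, by simp, by simp [hn]⟩
      by_cases hx0 : x ∈ C 0
      · obtain ⟨k, hkn, hPk, hgr⟩ :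
            ∃ k, k ≤ n - 1 ∧ x ∈ C k ∧ ∀ j, k < j → j ≤ n - 1 → x ∉ C j :=
          ⟨Nat.findGreatest (fun i => x ∈ C i) (n-1), Nat.findGreatest_le _,
            Nat.findGreatest_spec (P := fun i => x ∈ C i) (Nat.zero_le _) hx0,
            fun j hj hj' => Nat.findGreatest_is_greatest (P := fun i => x ∈ C i) hj hj'⟩
        have hxD : x ∈ D k := by
          by_contra hxD
          exact hx k (by omega) ⟨hPk, hxD⟩
        refine ⟨k + 1, by omega, ?_, ?_⟩
        · simp only [Nat.add_sub_cancel, if_neg (Nat.succ_ne_zero k)]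
          exact hxD
        · by_cases hkn' : k + 1 = n
          · simp [hkn']
          · rw [if_neg hkn']
            exact hgr (k+1) (by omega) (by omega)
      · refine ⟨0, by omega, by simp, ?_⟩
        by_cases h0n : (0 : ℕ) = n
        · simp [← h0n]
        · rw [if_neg h0n]; exact hx0
    · rintro ⟨i, hi, hx1, hx2⟩ j hj ⟨hxC, hxD⟩
      by_cases hi0 : i = 0
      · subst hi0
        rw [if_neg (by omega : ¬ (0 : ℕ) = n)] at hx2
        exact hx2 (hrep.C_anti 0 j (Nat.zero_le _) hj hxC)
      · rw [if_neg hi0] at hx1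
        rcases Nat.lt_or_ge j i with hji | hij
        · exact hxD (hrep.D_anti j (i-1) (by omega) (by omega) hx1)
        · have hin : i ≠ n → x ∉ C i := by intro h; rw [if_neg h] at hx2; exact hx2
          have : i < n := by
            rcases Nat.lt_or_ge i n with h | h
            · exact h
            · omega
          exact (hin (by omega)) (hrep.C_anti i j hij hj hxC)
  rw [key]
  refine biUnion_diff_mem hchain _ _ _ ?_ ?_
  · intro i hi
    by_cases h : i = 0
    · simp [h, hU]
    · rw [if_neg h]
      exact hrep.2.1 (i-1) (by simp at hi; omega)
  · intro i hi
    by_cases h : i = n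
    · simp [h, h0]
    · rw [if_neg h]
      exact hrep.1 i (by simp at hi; omega)


lemma inter_mem (hchain : ∀ I₁ ∈ I, ∀ I₂ ∈ I, I₁ ⊆ I₂ ∨ I₂ ⊆ I₁)
    {S T : Set Ω} (hS : S ∈ chainAlgebra I) (hT : T ∈ chainAlgebra I) :
    S ∩ T ∈ chainAlgebra I := by
  classical
  obtain ⟨n, C, D, hrep, rfl⟩ := mem_iff.mp hS
  obtain ⟨n', C', D', hrep', rfl⟩ := mem_iff.mp hT
  have key : (⋃ i ∈ Finset.range n, C i \ D i) ∩ (⋃ i ∈ Finset.range n', C' i \ D' i)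
      = ⋃ p ∈ Finset.range n ×ˢ Finset.range n',
          (C p.1 ∩ C' p.2) \ (D p.1 ∪ D' p.2) := by
    ext x
    simp only [Set.mem_inter_iff, Set.mem_iUnion, Finset.mem_range, Set.mem_diff,
      Finset.mem_product, Set.mem_inter_iff, Set.mem_union]
    constructor
    · rintro ⟨⟨i, hi, hx1, hx2⟩, ⟨j, hj, hy1, hy2⟩⟩
      exact ⟨(i, j), ⟨hi, hj⟩, ⟨hx1, hy1⟩, fun h => h.elim hx2 hy2⟩
    · rintro ⟨⟨i, j⟩, ⟨hi, hj⟩, ⟨hx1, hy1⟩, hx2⟩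
      exact ⟨⟨i, hi, hx1, fun h => hx2 (Or.inl h)⟩, ⟨j, hj, hy1, fun h => hx2 (Or.inr h)⟩⟩
  rw [key]
  refine biUnion_diff_mem hchain _ _ _ ?_ ?_
  · rintro ⟨i, j⟩ hij
    rw [Finset.mem_product] at hij
    exact inter_mem_of_chain hchain (hrep.1 i (by simpa using hij.1))
      (hrep'.1 j (by simpa using hij.2))
  · rintro ⟨i, j⟩ hij
    rw [Finset.mem_product] at hij
    exact union_mem_of_chain hchain (hrep.2.1 i (by simpa using hij.1))
      (hrep'.2.1 j (by simpa using hij.2))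

lemma union_mem (hchain : ∀ I₁ ∈ I, ∀ I₂ ∈ I, I₁ ⊆ I₂ ∨ I₂ ⊆ I₁)
    (h0 : ∅ ∈ I) (hU : Set.univ ∈ I) {S T : Set Ω}
    (hS : S ∈ chainAlgebra I) (hT : T ∈ chainAlgebra I) :
    S ∪ T ∈ chainAlgebra I := by
  have := compl_mem hchain h0 hU
    (inter_mem hchain (compl_mem hchain h0 hU hS) (compl_mem hchain h0 hU hT))
  rwa [compl_inter, compl_compl, compl_compl] at this

lemma diff_mem (hchain : ∀ I₁ ∈ I, ∀ I₂ ∈ I, I₁ ⊆ I₂ ∨ I₂ ⊆ I₁)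
    (h0 : ∅ ∈ I) (hU : Set.univ ∈ I) {S T : Set Ω}
    (hS : S ∈ chainAlgebra I) (hT : T ∈ chainAlgebra I) :
    S \ T ∈ chainAlgebra I := by
  rw [diff_eq]
  exact inter_mem hchain hS (compl_mem hchain h0 hU hT)

lemma univ_mem (h0 : ∅ ∈ I) (hU : Set.univ ∈ I) : (Set.univ : Set Ω) ∈ chainAlgebra I :=
  mem_of_mem_I h0 hU

lemma measurableSet_of_mem {m : MeasurableSpace Ω}
    (hgen : MeasurableSpace.generateFrom I = m) {S : Set Ω}
    (hS : S ∈ chainAlgebra I) : MeasurableSet S := by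
  obtain ⟨n, C, D, hrep, rfl⟩ := mem_iff.mp hS
  have hI : ∀ A ∈ I, MeasurableSet A := by
    intro A hA
    rw [← hgen]
    exact MeasurableSpace.measurableSet_generateFrom hA
  refine Finset.measurableSet_biUnion _ fun i hi => ?_
  rw [Finset.mem_range] at hi
  exact (hI _ (hrep.1 i hi)).diff (hI _ (hrep.2.1 i hi))


lemma sum_telescope_le {a b : ℕ → ℝ} {M : ℝ} {n : ℕ} (hM : 0 ≤ M)
    (ha : ∀ i < n, a i ≤ M) (hb0 : ∀ i < n, 0 ≤ b i)
    (hab : ∀ i, i + 1 < n → a (i + 1) ≤ b i) :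
    ∑ i ∈ Finset.range n, (a i - b i) ≤ M := by
  have aux : ∀ k, 0 < k → k ≤ n → ∑ i ∈ Finset.range k, (a i - b i) ≤ a 0 - b (k - 1) := by
    intro k
    induction k with
    | zero => omega
    | succ k ih =>
      intro _ hkn
      rcases Nat.eq_zero_or_pos k with rfl | hk
      · simp [Finset.sum_range_one]
      · have h1 := ih hk (by omega)
        have h2 : a k ≤ b (k - 1) := by
          have := hab (k - 1) (by omega)
          rwa [Nat.sub_add_cancel (by omega)] at this
        rw [Finset.sum_range_succ]
        simp only [Nat.add_sub_cancel]
        linarith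
  rcases Nat.eq_zero_or_pos n with rfl | hn
  · simpa using hM
  · have := aux n hn le_rfl
    have h0 : a 0 ≤ M := ha 0 hn
    have hb : 0 ≤ b (n - 1) := hb0 (n - 1) (by omega)
    linarith

end ChainAux

section MuLemmas

open ChainAux

variable {Ω : Type*} [m : MeasurableSpace Ω] {I : Set (Set Ω)} {v μ : Set Ω → ℝ}

theorem mu_empty
    (hμchain : ∀ (n : ℕ) (C D : ℕ → Set Ω), (∀ i < n, C i ∈ I) → (∀ i < n, D i ∈ I) →
      (∀ i < n, D i ⊆ C i) → (∀ i, i + 1 < n → C (i + 1) ⊆ D i) →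
      μ (⋃ i ∈ Finset.range n, C i \ D i) = ∑ i ∈ Finset.range n, (v (C i) - v (D i))) :
    μ ∅ = 0 := by
  have := hμchain 0 (fun _ => ∅) (fun _ => ∅) (by omega) (by omega) (by omega) (by omega)
  simpa using this

theorem mu_mono (hchain : ∀ I₁ ∈ I, ∀ I₂ ∈ I, I₁ ⊆ I₂ ∨ I₂ ⊆ I₁)
    (h0 : ∅ ∈ I) (hU : Set.univ ∈ I)
    (hμpos : ∀ S ∈ chainAlgebra I, 0 ≤ μ S)
    (hμadd : ∀ S ∈ chainAlgebra I, ∀ T ∈ chainAlgebra I, Disjoint S T →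
      μ (S ∪ T) = μ S + μ T)
    {A B : Set Ω} (hA : A ∈ chainAlgebra I) (hB : B ∈ chainAlgebra I) (hAB : A ⊆ B) :
    μ A ≤ μ B := by
  have hdiff : B \ A ∈ chainAlgebra I := diff_mem hchain h0 hU hB hA
  have := hμadd A hA (B \ A) hdiff disjoint_sdiff_right
  rw [Set.union_diff_cancel hAB] at this
  have hpos := hμpos (B \ A) hdiff
  linarith

theorem mu_le_v (hgen : MeasurableSpace.generateFrom I = m)
    (hv0 : v ∅ = 0)
    (hvmono : ∀ A B : Set Ω, MeasurableSet A → MeasurableSet B → A ⊆ B → v A ≤ v B)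
    (hvsub : ∀ A B : Set Ω, MeasurableSet A → MeasurableSet B →
      v (A ∪ B) + v (A ∩ B) ≤ v A + v B)
    (hμchain : ∀ (n : ℕ) (C D : ℕ → Set Ω), (∀ i < n, C i ∈ I) → (∀ i < n, D i ∈ I) →
      (∀ i < n, D i ⊆ C i) → (∀ i, i + 1 < n → C (i + 1) ⊆ D i) →
      μ (⋃ i ∈ Finset.range n, C i \ D i) = ∑ i ∈ Finset.range n, (v (C i) - v (D i)))
    {S : Set Ω} (hS : S ∈ chainAlgebra I) : μ S ≤ v S := by
  have hI : ∀ A ∈ I, MeasurableSet A := fun A hA => by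
    rw [← hgen]; exact MeasurableSpace.measurableSet_generateFrom hA
  have hSm : MeasurableSet S := measurableSet_of_mem hgen hS
  have hvS : 0 ≤ v S := by
    have := hvmono ∅ S MeasurableSet.empty hSm (Set.empty_subset S)
    linarith [hv0 ▸ this]
  obtain ⟨n, C, D, hrep, hSeq⟩ := mem_iff.mp hS
  have hμS : μ S = ∑ i ∈ Finset.range n, (v (C i) - v (D i)) := by
    rw [hSeq]; exact hμchain n C D hrep.1 hrep.2.1 hrep.2.2.1 hrep.2.2.2
  rw [hμS]
  have step1 : ∀ i < n, v (C i) - v (D i) ≤ v (C i ∩ S) - v (D i ∩ S) := by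
    intro i hi
    have hCi := hI _ (hrep.1 i hi)
    have hDi := hI _ (hrep.2.1 i hi)
    have hpiece : C i \ D i ⊆ S := by
      rw [hSeq]; exact fun x hx => Set.mem_biUnion (Finset.mem_range.mpr hi) hx
    have hunion : D i ∪ (C i ∩ S) = C i := by
      apply Set.Subset.antisymm
      · exact Set.union_subset (hrep.2.2.1 i hi) Set.inter_subset_left
      · intro x hx
        by_cases hxD : x ∈ D i
        · exact Or.inl hxD
        · exact Or.inr ⟨hx, hpiece ⟨hx, hxD⟩⟩
    have hinter : D i ∩ (C i ∩ S) = D i ∩ S := by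
      rw [← Set.inter_assoc, Set.inter_eq_left.mpr (hrep.2.2.1 i hi)]
    have := hvsub (D i) (C i ∩ S) hDi (hCi.inter hSm)
    rw [hunion, hinter] at this
    linarith
  calc ∑ i ∈ Finset.range n, (v (C i) - v (D i))
      ≤ ∑ i ∈ Finset.range n, (v (C i ∩ S) - v (D i ∩ S)) :=
        Finset.sum_le_sum fun i hi => step1 i (Finset.mem_range.mp hi)
    _ ≤ v S := by
        refine sum_telescope_le hvS ?_ ?_ ?_
        · intro i hi
          exact hvmono _ _ ((hI _ (hrep.1 i hi)).inter hSm) hSm Set.inter_subset_right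
        · intro i hi
          have := hvmono ∅ _ MeasurableSet.empty ((hI _ (hrep.2.1 i hi)).inter hSm)
            (Set.empty_subset _)
          linarith [hv0 ▸ this]
        · intro i hi
          exact hvmono _ _ ((hI _ (hrep.1 (i+1) hi)).inter hSm)
            ((hI _ (hrep.2.1 i (by omega))).inter hSm)
            (Set.inter_subset_inter_left S (hrep.2.2.2 i hi))


theorem mu_ctble (hchain : ∀ I₁ ∈ I, ∀ I₂ ∈ I, I₁ ⊆ I₂ ∨ I₂ ⊆ I₁)
    (h0 : ∅ ∈ I) (hU : Set.univ ∈ I)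
    (hgen : MeasurableSpace.generateFrom I = m)
    (hv0 : v ∅ = 0)
    (hvmono : ∀ A B : Set Ω, MeasurableSet A → MeasurableSet B → A ⊆ B → v A ≤ v B)
    (hvanti : ∀ A : ℕ → Set Ω, (∀ n, MeasurableSet (A n)) → Antitone A →
      Tendsto (fun n => v (A n)) atTop (nhds (v (⋂ n, A n))))
    (hvsub : ∀ A B : Set Ω, MeasurableSet A → MeasurableSet B →
      v (A ∪ B) + v (A ∩ B) ≤ v A + v B)
    (hμchain : ∀ (n : ℕ) (C D : ℕ → Set Ω), (∀ i < n, C i ∈ I) → (∀ i < n, D i ∈ I) →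
      (∀ i < n, D i ⊆ C i) → (∀ i, i + 1 < n → C (i + 1) ⊆ D i) →
      μ (⋃ i ∈ Finset.range n, C i \ D i) = ∑ i ∈ Finset.range n, (v (C i) - v (D i)))
    (hμpos : ∀ S ∈ chainAlgebra I, 0 ≤ μ S)
    (hμadd : ∀ S ∈ chainAlgebra I, ∀ T ∈ chainAlgebra I, Disjoint S T →
      μ (S ∪ T) = μ S + μ T) :
    ∀ S : ℕ → Set Ω, (∀ n, S n ∈ chainAlgebra I) → Pairwise (Function.onFun Disjoint S) →
      (⋃ n, S n) ∈ chainAlgebra I → HasSum (fun n => μ (S n)) (μ (⋃ n, S n)) := by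
  intro S hSmem hdisj hUmem
  set U := ⋃ n, S n with hUdef
  set P : ℕ → Set Ω := fun n => ⋃ i ∈ Finset.range n, S i with hPdef
  have hPsucc : ∀ n, P (n + 1) = P n ∪ S n := by
    intro n
    simp only [hPdef, Finset.range_add_one, Finset.set_biUnion_insert, Set.union_comm]
  have hPmem : ∀ n, P n ∈ chainAlgebra I := by
    intro n
    induction n with
    | zero => simpa [hPdef] using ChainAux.empty_mem
    | succ k ih => rw [hPsucc]; exact ChainAux.union_mem hchain h0 hU ih (hSmem k)
  have hPU : ∀ n, P n ⊆ U := by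
    intro n x hx
    simp only [hPdef, Set.mem_iUnion, Finset.mem_range] at hx
    obtain ⟨i, _, hx⟩ := hx
    exact Set.mem_iUnion.mpr ⟨i, hx⟩
  have hPdisj : ∀ n, Disjoint (P n) (S n) := by
    intro n
    rw [Set.disjoint_left]
    intro x hx hxS
    simp only [hPdef, Set.mem_iUnion, Finset.mem_range] at hx
    obtain ⟨i, hi, hx⟩ := hx
    exact (Set.disjoint_left.mp (hdisj (show i ≠ n by omega))) hx hxS
  have hμP : ∀ n, μ (P n) = ∑ i ∈ Finset.range n, μ (S i) := by
    intro n
    induction n with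
    | zero =>
      simp only [hPdef, Finset.range_zero, Finset.sum_empty]
      simpa using mu_empty hμchain
    | succ k ih =>
      rw [hPsucc, hμadd _ (hPmem k) _ (hSmem k) (hPdisj k), ih, Finset.sum_range_succ]
  set T : ℕ → Set Ω := fun n => U \ P n with hTdef
  have hTmem : ∀ n, T n ∈ chainAlgebra I :=
    fun n => ChainAux.diff_mem hchain h0 hU hUmem (hPmem n)
  have hμUsplit : ∀ n, μ U = μ (P n) + μ (T n) := by
    intro n
    have := hμadd _ (hPmem n) _ (hTmem n) disjoint_sdiff_right
    rwa [Set.union_diff_cancel (hPU n)] at this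
  have hTanti : Antitone T := by
    intro a b hab
    refine Set.diff_subset_diff_right ?_
    intro x hx
    simp only [hPdef, Set.mem_iUnion, Finset.mem_range] at hx ⊢
    obtain ⟨i, hi, hx⟩ := hx
    exact ⟨i, by omega, hx⟩
  have hTmeas : ∀ n, MeasurableSet (T n) :=
    fun n => ChainAux.measurableSet_of_mem hgen (hTmem n)
  have hTinter : ⋂ n, T n = ∅ := by
    simp only [hTdef, ← Set.diff_iUnion]
    have : ⋃ n, P n = U := by
      apply Set.Subset.antisymm
      · exact Set.iUnion_subset hPU
      · intro x hx
        obtain ⟨i, hx⟩ := Set.mem_iUnion.mp hx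
        exact Set.mem_iUnion.mpr ⟨i + 1, by
          simp only [hPdef, Set.mem_iUnion, Finset.mem_range]
          exact ⟨i, by omega, hx⟩⟩
    rw [this, Set.diff_self]
  have hvT : Tendsto (fun n => v (T n)) atTop (nhds 0) := by
    have := hvanti T hTmeas hTanti
    rwa [hTinter, hv0] at this
  have hμT0 : Tendsto (fun n => μ (T n)) atTop (nhds 0) := by
    refine squeeze_zero (fun n => hμpos _ (hTmem n)) (fun n => ?_) hvT
    exact mu_le_v hgen hv0 hvmono hvsub hμchain (hTmem n)
  have htends : Tendsto (fun n => ∑ i ∈ Finset.range n, μ (S i)) atTop (nhds (μ U)) := by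
    have : (fun n => ∑ i ∈ Finset.range n, μ (S i)) = fun n => μ U - μ (T n) := by
      funext n
      rw [← hμP n]
      linarith [hμUsplit n]
    rw [this]
    simpa using tendsto_const_nhds.sub hμT0
  exact (hasSum_iff_tendsto_nat_of_nonneg (fun i => hμpos _ (hSmem i)) _).mpr htends


open ChainAux in
lemma biUnion_mem_alg (hchain : ∀ I₁ ∈ I, ∀ I₂ ∈ I, I₁ ⊆ I₂ ∨ I₂ ⊆ I₁)
    (h0 : ∅ ∈ I) (hU : Set.univ ∈ I) {f : ℕ → Set Ω} (t : Finset ℕ)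
    (hf : ∀ i, f i ∈ chainAlgebra I) : (⋃ i ∈ t, f i) ∈ chainAlgebra I := by
  classical
  induction t using Finset.induction_on with
  | empty => simpa using ChainAux.empty_mem
  | @insert a s ha ih =>
    rw [Finset.set_biUnion_insert]
    exact ChainAux.union_mem hchain h0 hU (hf a) ih


theorem final_thm (hchain : ∀ I₁ ∈ I, ∀ I₂ ∈ I, I₁ ⊆ I₂ ∨ I₂ ⊆ I₁)
    (h0 : ∅ ∈ I) (hU : Set.univ ∈ I)
    (hgen : MeasurableSpace.generateFrom I = m)
    (hv0 : v ∅ = 0)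
    (hvmono : ∀ A B : Set Ω, MeasurableSet A → MeasurableSet B → A ⊆ B → v A ≤ v B)
    (hvanti : ∀ A : ℕ → Set Ω, (∀ n, MeasurableSet (A n)) → Antitone A →
      Tendsto (fun n => v (A n)) atTop (nhds (v (⋂ n, A n))))
    (hvsub : ∀ A B : Set Ω, MeasurableSet A → MeasurableSet B →
      v (A ∪ B) + v (A ∩ B) ≤ v A + v B)
    (hμchain : ∀ (n : ℕ) (C D : ℕ → Set Ω), (∀ i < n, C i ∈ I) → (∀ i < n, D i ∈ I) →
      (∀ i < n, D i ⊆ C i) → (∀ i, i + 1 < n → C (i + 1) ⊆ D i) →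
      μ (⋃ i ∈ Finset.range n, C i \ D i) = ∑ i ∈ Finset.range n, (v (C i) - v (D i)))
    (hμpos : ∀ S ∈ chainAlgebra I, 0 ≤ μ S)
    (hμadd : ∀ S ∈ chainAlgebra I, ∀ T ∈ chainAlgebra I, Disjoint S T →
      μ (S ∪ T) = μ S + μ T) :
    ∃! ν : Measure Ω, IsFiniteMeasure ν ∧ ∀ S ∈ chainAlgebra I, (ν S).toReal = μ S := by
  classical
  have hctble := mu_ctble hchain h0 hU hgen hv0 hvmono hvanti hvsub hμchain hμpos hμadd
  have hμ0 : μ ∅ = 0 := mu_empty hμchain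
  -- the extended function
  set mext : Set Ω → ℝ≥0∞ :=
    MeasureTheory.extend (fun s (_ : s ∈ chainAlgebra I) => ENNReal.ofReal (μ s)) with hmext
  have hmext_empty : mext ∅ = 0 := by
    rw [hmext, MeasureTheory.extend_eq _ ChainAux.empty_mem, hμ0]
    simp
  have hmext_eq : ∀ {s : Set Ω}, s ∈ chainAlgebra I → mext s = ENNReal.ofReal (μ s) :=
    fun hs => MeasureTheory.extend_eq _ hs
  set om : OuterMeasure Ω := OuterMeasure.ofFunction mext hmext_empty with hom
  -- om agrees with μ on the algebra
  have hom_eq : ∀ s ∈ chainAlgebra I, om s = ENNReal.ofReal (μ s) := by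
    intro s hs
    refine le_antisymm ((OuterMeasure.ofFunction_le s).trans (hmext_eq hs).le) ?_
    rw [hom, OuterMeasure.ofFunction_apply]
    refine le_iInf fun f => le_iInf fun hcov => ?_
    by_cases hall : ∀ i, f i ∈ chainAlgebra I
    · set g : ℕ → Set Ω := fun i => (s ∩ f i) \ ⋃ j ∈ Finset.range i, f j with hg
      have hgmem : ∀ i, g i ∈ chainAlgebra I := fun i =>
        ChainAux.diff_mem hchain h0 hU (ChainAux.inter_mem hchain hs (hall i))
          (biUnion_mem_alg hchain h0 hU _ hall)
      have hkey : ∀ i j, i < j → Disjoint (g i) (g j) := by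
        intro i j hlt
        rw [Set.disjoint_left]
        intro x hxi hxj
        refine hxj.2 ?_
        simp only [Set.mem_iUnion, Finset.mem_range]
        exact ⟨i, hlt, hxi.1.2⟩
      have hgdisj : Pairwise (Function.onFun Disjoint g) := by
        intro i j hij
        rcases Nat.lt_or_ge i j with h | h
        · exact hkey i j h
        · exact (hkey j i (by omega)).symm
      have hgU : ⋃ i, g i = s := by
        apply Set.Subset.antisymm
        · exact Set.iUnion_subset fun i x hx => hx.1.1
        · intro x hx
          have hex : ∃ i, x ∈ f i := by
            obtain ⟨i, hi⟩ := Set.mem_iUnion.mp (hcov hx)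
            exact ⟨i, hi⟩
          refine Set.mem_iUnion.mpr ⟨Nat.find hex, ⟨⟨hx, Nat.find_spec hex⟩, ?_⟩⟩
          simp only [Set.mem_iUnion, Finset.mem_range, not_exists]
          intro j hj
          exact Nat.find_min hex hj
      have hsum : HasSum (fun i => μ (g i)) (μ s) := by
        have := hctble g hgmem hgdisj (hgU ▸ hs)
        rwa [hgU] at this
      calc ENNReal.ofReal (μ s) = ENNReal.ofReal (∑' i, μ (g i)) := by rw [hsum.tsum_eq]
        _ = ∑' i, ENNReal.ofReal (μ (g i)) :=
            ENNReal.ofReal_tsum_of_nonneg (fun i => hμpos _ (hgmem i)) hsum.summable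
        _ ≤ ∑' i, mext (f i) := by
            refine ENNReal.tsum_le_tsum fun i => ?_
            rw [hmext_eq (hall i)]
            exact ENNReal.ofReal_le_ofReal
              (mu_mono hchain h0 hU hμpos hμadd (hgmem i) (hall i)
                (fun x hx => hx.1.2))
    · push_neg at hall
      obtain ⟨i, hi⟩ := hall
      have : mext (f i) = ⊤ := MeasureTheory.extend_eq_top _ hi
      calc ENNReal.ofReal (μ s) ≤ ⊤ := le_top
        _ = mext (f i) := this.symm
        _ ≤ ∑' j, mext (f j) := ENNReal.le_tsum i
  -- Caratheodory measurability of algebra sets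
  have hcara : ∀ s ∈ chainAlgebra I, MeasurableSet[om.caratheodory] s := by
    intro s hs
    refine OuterMeasure.ofFunction_caratheodory fun t => ?_
    by_cases ht : t ∈ chainAlgebra I
    · have h1 : t ∩ s ∈ chainAlgebra I := ChainAux.inter_mem hchain ht hs
      have h2 : t \ s ∈ chainAlgebra I := ChainAux.diff_mem hchain h0 hU ht hs
      rw [hmext_eq ht, hmext_eq h1, hmext_eq h2,
        ← ENNReal.ofReal_add (hμpos _ h1) (hμpos _ h2)]
      refine ENNReal.ofReal_le_ofReal ?_
      rw [← hμadd _ h1 _ h2 (disjoint_sdiff_right.mono_left Set.inter_subset_right),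
        Set.inter_union_diff]
    · have htop : mext t = ⊤ := MeasureTheory.extend_eq_top _ ht
      rw [htop]
      exact le_top
  have hle : m ≤ om.caratheodory := by
    rw [← hgen]
    refine MeasurableSpace.generateFrom_le fun t ht => ?_
    exact hcara t (ChainAux.mem_of_mem_I h0 ht)
  set ν : Measure Ω := om.toMeasure hle with hν
  have hνeq : ∀ s ∈ chainAlgebra I, ν s = ENNReal.ofReal (μ s) := by
    intro s hs
    rw [hν, MeasureTheory.toMeasure_apply om hle (ChainAux.measurableSet_of_mem hgen hs)]
    exact hom_eq s hs
  have hνfin : IsFiniteMeasure ν := by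
    constructor
    rw [hνeq _ (ChainAux.univ_mem h0 hU)]
    exact ENNReal.ofReal_lt_top
  have hνtoReal : ∀ S ∈ chainAlgebra I, (ν S).toReal = μ S := by
    intro s hs
    rw [hνeq s hs, ENNReal.toReal_ofReal (hμpos s hs)]
  have hgen' : m = MeasurableSpace.generateFrom (chainAlgebra I) := by
    refine le_antisymm ?_ ?_
    · rw [← hgen]
      exact MeasurableSpace.generateFrom_le fun t ht =>
        MeasurableSpace.measurableSet_generateFrom (ChainAux.mem_of_mem_I h0 ht)
    · exact MeasurableSpace.generateFrom_le fun t ht => ChainAux.measurableSet_of_mem hgen ht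
  have hpi : IsPiSystem (chainAlgebra I) := fun s hs t ht _ => ChainAux.inter_mem hchain hs ht
  refine ⟨ν, ⟨hνfin, hνtoReal⟩, ?_⟩
  rintro ν' ⟨hν'fin, hν'toReal⟩
  haveI := hν'fin
  haveI := hνfin
  have heq : ∀ s ∈ chainAlgebra I, ν' s = ν s := by
    intro s hs
    have h1 : ν' s ≠ ⊤ := measure_ne_top ν' s
    have h2 : ν s ≠ ⊤ := measure_ne_top ν s
    rw [← ENNReal.ofReal_toReal h1, ← ENNReal.ofReal_toReal h2,
      hν'toReal s hs, hνtoReal s hs]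
  exact MeasureTheory.ext_of_generate_finite (chainAlgebra I) hgen' hpi heq
    (heq _ (ChainAux.univ_mem h0 hU))

end MuLemmas

theorem chain_premeasure_countably_additive {Ω : Type*} [m : MeasurableSpace Ω]
    (I : Set (Set Ω)) (h0 : ∅ ∈ I) (hU : Set.univ ∈ I)
    (hchain : ∀ I₁ ∈ I, ∀ I₂ ∈ I, I₁ ⊆ I₂ ∨ I₂ ⊆ I₁)
    (hgen : MeasurableSpace.generateFrom I = m)
    (v : Set Ω → ℝ) (hv : IsSubmodular v)
    (μ : Set Ω → ℝ)
    (hμchain : ∀ (n : ℕ) (C D : ℕ → Set Ω), (∀ i < n, C i ∈ I) → (∀ i < n, D i ∈ I) →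
      (∀ i < n, D i ⊆ C i) → (∀ i, i + 1 < n → C (i + 1) ⊆ D i) →
      μ (⋃ i ∈ Finset.range n, C i \ D i) = ∑ i ∈ Finset.range n, (v (C i) - v (D i)))
    (hμpos : ∀ S ∈ chainAlgebra I, 0 ≤ μ S)
    (hμadd : ∀ S ∈ chainAlgebra I, ∀ T ∈ chainAlgebra I, Disjoint S T →
      μ (S ∪ T) = μ S + μ T) :
    (∀ S : ℕ → Set Ω, (∀ n, S n ∈ chainAlgebra I) → Pairwise (Function.onFun Disjoint S) →
      (⋃ n, S n) ∈ chainAlgebra I → HasSum (fun n => μ (S n)) (μ (⋃ n, S n))) ∧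
    (∃! ν : Measure Ω, IsFiniteMeasure ν ∧ ∀ S ∈ chainAlgebra I, (ν S).toReal = μ S) := by
  obtain ⟨hv0, hvmono, hvmonoc, hvanti, hvsub⟩ := hv
  exact ⟨mu_ctble hchain h0 hU hgen hv0 hvmono hvanti hvsub hμchain hμpos hμadd,
    final_thm hchain h0 hU hgen hv0 hvmono hvanti hvsub hμchain hμpos hμadd⟩
end
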